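/- arXiv:1105.4238 — 9 statements merged into one kernel-verified Lean document; each statement's English description precedes it below -/
import Mathlib

section
/- Let q be an odd prime power and F a finite field with q elements. Then there exists a non-square element z in F such that 1 - z is also a non-square element of F. -/
open Finset

/-- If `g` is an even function on a field of characteristic ≠ 2,
its image has at most `(card F + 1)/2` elements. -/
lemma aux_even_image (F : Type*) [Field F] [Fintype F] [DecidableEq F]
    (h2 : ringChar F ≠ 2) (g : F → F) (hg : ∀ t, g (-t) = g t) :
    2 * #(univ.image g) ≤ Fintype.card F + 1 := by
  have hkey : 2 * #((univ.erase (0 : F)).image g) ≤ #(univ.erase (0 : F)) := by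
    apply Finset.mul_card_image_le_card
    intro a ha
    obtain ⟨t, ht, rfl⟩ := Finset.mem_image.mp ha
    have ht0 : t ≠ 0 := Finset.ne_of_mem_erase ht
    have htneg : t ≠ -t := by
      intro h
      exact ht0 (by
        have := (Ring.eq_self_iff_eq_zero_of_char_ne_two h2).mp h.symm
        exact this)
    have hsub : ({t, -t} : Finset F) ⊆ (univ.erase 0).filter (fun x => g x = g t) := by
      intro x hx
      simp only [Finset.mem_insert, Finset.mem_singleton] at hx
      rcases hx with rfl | rfl
      · simp [Finset.mem_filter, Finset.mem_erase, ht0]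
      · simp [Finset.mem_filter, Finset.mem_erase, neg_eq_zero, ht0, hg]
    calc 2 = #({t, -t} : Finset F) := (Finset.card_pair htneg).symm
      _ ≤ _ := Finset.card_le_card hsub
  have h1 : univ.image g = insert (g 0) ((univ.erase (0 : F)).image g) := by
    conv_lhs => rw [← Finset.insert_erase (Finset.mem_univ (0 : F))]
    rw [Finset.image_insert]
  have h3 : #(univ.erase (0 : F)) = Fintype.card F - 1 := by
    rw [Finset.card_erase_of_mem (Finset.mem_univ _), Finset.card_univ]
  have h4 : 1 ≤ Fintype.card F := Fintype.card_pos
  have h5 : #(univ.image g) ≤ #((univ.erase (0 : F)).image g) + 1 := by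
    rw [h1]; exact Finset.card_insert_le _ _
  omega

theorem stmt_0 (F : Type*) [Field F] [Fintype F] (q : ℕ)
    (hq : Fintype.card F = q) (hodd : Odd q) :
    ∃ z : F, ¬ IsSquare z ∧ ¬ IsSquare (1 - z) := by
  classical
  have h2 : ringChar F ≠ 2 := by
    intro h
    have h' := FiniteField.even_card_of_char_two h
    have := Nat.odd_iff.mp hodd
    omega
  by_contra hcon
  push_neg at hcon
  -- every nonsquare z satisfies: 1 - z is a square
  set A : Finset F := univ.image (fun t => t * t) with hA
  set S : Finset F := univ.image (fun t => 1 - t * t) with hS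
  have hAcard : 2 * #A ≤ q + 1 := by
    rw [← hq]
    exact aux_even_image F h2 _ (fun t => by ring_nf)
  have hScard : 2 * #S ≤ q + 1 := by
    rw [← hq]
    exact aux_even_image F h2 _ (fun t => by ring_nf)
  have h0S : (0 : F) ∈ S := Finset.mem_image.mpr ⟨1, Finset.mem_univ _, by ring⟩
  have h1S : (1 : F) ∈ S := Finset.mem_image.mpr ⟨0, Finset.mem_univ _, by ring⟩
  have h1S' : (1 : F) ∈ S.erase 0 := Finset.mem_erase.mpr ⟨one_ne_zero, h1S⟩
  -- univ ⊆ A ∪ (S minus {0,1})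
  have hcover : (univ : Finset F) ⊆ A ∪ ((S.erase 0).erase 1) := by
    intro z _
    by_cases hz : IsSquare z
    · obtain ⟨r, hr⟩ := hz
      exact Finset.mem_union_left _ (Finset.mem_image.mpr ⟨r, Finset.mem_univ _, hr.symm⟩)
    · have hz1 : IsSquare (1 - z) := hcon z hz
      obtain ⟨r, hr⟩ := hz1
      have hzS : z ∈ S := Finset.mem_image.mpr ⟨r, Finset.mem_univ _, by
        rw [← hr]; ring⟩
      have hz0 : z ≠ 0 := fun h => hz (h ▸ ⟨0, by ring⟩)
      have hz1' : z ≠ 1 := fun h => hz (h ▸ ⟨1, by ring⟩)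
      exact Finset.mem_union_right _
        (Finset.mem_erase.mpr ⟨hz1', Finset.mem_erase.mpr ⟨hz0, hzS⟩⟩)
  have hq' : q ≤ #A + #((S.erase 0).erase 1) := by
    calc q = #(univ : Finset F) := by rw [Finset.card_univ, hq]
      _ ≤ #(A ∪ ((S.erase 0).erase 1)) := Finset.card_le_card hcover
      _ ≤ _ := Finset.card_union_le _ _
  have hSe : #((S.erase 0).erase 1) = #S - 2 := by
    rw [Finset.card_erase_of_mem h1S', Finset.card_erase_of_mem h0S]
    omega
  have hS2 : 2 ≤ #S := by
    have : ({0, 1} : Finset F) ⊆ S := by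
      intro x hx
      simp only [Finset.mem_insert, Finset.mem_singleton] at hx
      rcases hx with rfl | rfl
      · exact h0S
      · exact h1S
    calc 2 = #({0, 1} : Finset F) := by simp
      _ ≤ #S := Finset.card_le_card this
  omega
end

section
/- Let F be a finite field of odd order q, z a non-square in F, and Δ the 2×2 diagonal matrix diag(1, -z). Then every 2×2 matrix T over F satisfying T·Δ·Tᵗ = Δ has one of the two forms: [[x, y], [y*z, x]] or [[x, y], [-y*z, -x]], where x^2 - y^2*z = 1. -/
open Matrix

theorem stmt_2 (F : Type*) [Field F] [Fintype F] (q : ℕ)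
    (hq : Fintype.card F = q) (hodd : Odd q) (z : F) (hz : ¬ IsSquare z)
    (Δ : Matrix (Fin 2) (Fin 2) F) (hΔ : Δ = !![1, 0; 0, -z])
    (T : Matrix (Fin 2) (Fin 2) F) (hT : T * Δ * Tᵀ = Δ) :
    ∃ x y : F, x ^ 2 - y ^ 2 * z = 1 ∧
      (T = !![x, y; y * z, x] ∨ T = !![x, y; -(y * z), -x]) := by
  subst hΔ
  have hz0 : z ≠ 0 := fun h => hz (h ▸ IsSquare.zero)
  set a := T 0 0 with ha
  set b := T 0 1 with hb
  set c := T 1 0 with hc0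
  set d := T 1 1 with hd0
  have hTe : T = !![a, b; c, d] := by
    rw [ha, hb, hc0, hd0]; exact Matrix.eta_fin_two T
  have hT' := hT
  rw [hTe, show (!![a, b; c, d])ᵀ = !![a, c; b, d] from by
    ext i j; fin_cases i <;> fin_cases j <;> rfl] at hT'
  have e1 : a ^ 2 - z * b ^ 2 = 1 := by
    have := Matrix.ext_iff.mpr hT' 0 0
    simp [Matrix.mul_apply, Fin.sum_univ_two, Matrix.transpose_apply] at this
    linear_combination this
  have e2 : a * c - z * b * d = 0 := by
    have := Matrix.ext_iff.mpr hT' 0 1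
    simp [Matrix.mul_apply, Fin.sum_univ_two, Matrix.transpose_apply] at this
    linear_combination this
  have hdet : a * d - b * c = 1 ∨ a * d - b * c = -1 := by
    have h := congrArg Matrix.det hT
    rw [Matrix.det_mul, Matrix.det_mul, Matrix.det_transpose] at h
    have hΔd : Matrix.det !![(1 : F), 0; 0, -z] = -z := by
      simp [Matrix.det_fin_two_of]
    rw [hΔd] at h
    have h2 : Matrix.det T * Matrix.det T = 1 := by
      have hzn : (-z : F) ≠ 0 := neg_ne_zero.mpr hz0
      have h3 : Matrix.det T * Matrix.det T * (-z) = 1 * (-z) := by linear_combination h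
      exact mul_right_cancel₀ hzn h3
    have := mul_self_eq_one_iff.mp h2
    rw [hTe, Matrix.det_fin_two_of] at this
    exact this
  rcases hdet with e3 | e3
  · refine ⟨a, b, by linear_combination e1, Or.inl ?_⟩
    have hc : c = b * z := by linear_combination (-c) * e1 + a * e2 + z * b * e3
    have hd : d = a := by linear_combination (-d) * e1 + b * e2 + a * e3
    rw [hTe, hc, hd]
  · refine ⟨a, b, by linear_combination e1, Or.inr ?_⟩
    have hc : c = -(b * z) := by linear_combination (-c) * e1 + a * e2 + z * b * e3
    have hd : d = -a := by linear_combination (-d) * e1 + b * e2 + a * e3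
    rw [hTe, hc, hd]
end

section
/- Let F be a finite field of odd order q, z a non-square in F, and Δ = diag(1, -z). Then the orthogonal group O(2, Δ) = { T ∈ GL₂(F) : T·Δ·Tᵗ = Δ } has exactly 2(q+1) elements. -/
open Matrix
lemma orth_char {F : Type*} [Field F] {z : F} (hz0 : z ≠ 0) (T : Matrix (Fin 2) (Fin 2) F)
    (h : T * !![1,0;0,-z] * Tᵀ = !![1,0;0,-z]) :
    (T 0 0)^2 - z * (T 0 1)^2 = 1 ∧ T 1 0 = T.det * (z * T 0 1) ∧ T 1 1 = T.det * T 0 0 ∧ T.det ^ 2 = 1 := by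
  have h00 := congrFun (congrFun h 0) 0
  have h01 := congrFun (congrFun h 0) 1
  have h11 := congrFun (congrFun h 1) 1
  simp [Matrix.mul_apply, Fin.sum_univ_two] at h00 h01 h11
  rw [Matrix.det_fin_two]
  set a := T 0 0; set b := T 0 1; set c := T 1 0; set d := T 1 1
  have e1 : a ^ 2 - z * b ^ 2 = 1 := by linear_combination h00
  have hc : c = (a * d - b * c) * (z * b) := by linear_combination -c*e1 + a*h01
  have hd : d = (a * d - b * c) * a := by linear_combination -d*e1 + b*h01
  have h2 : z * (a * d - b * c) ^ 2 = z * 1 := by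
    linear_combination (-1)*h11 + (c + (a*d-b*c)*z*b)*hc - z*(d + (a*d-b*c)*a)*hd - z*(a*d-b*c)^2*e1
  exact ⟨e1, hc, hd, mul_left_cancel₀ hz0 h2⟩
lemma orth_mk {F : Type*} [Field F] {z a b s : F} (h1 : a^2 - z*b^2 = 1) (hs : s^2 = 1) :
    (!![a, b; s*(z*b), s*a] : Matrix (Fin 2) (Fin 2) F).det = s ∧
    !![a, b; s*(z*b), s*a] * !![1,0;0,-z] * (!![a, b; s*(z*b), s*a] : Matrix (Fin 2) (Fin 2) F)ᵀ = !![1,0;0,-z] := by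
  have ht : (!![a, b; s*(z*b), s*a] : Matrix (Fin 2) (Fin 2) F)ᵀ = !![a, s*(z*b); b, s*a] := by
    ext i j; fin_cases i <;> fin_cases j <;> rfl
  refine ⟨by rw [Matrix.det_fin_two_of]; linear_combination s*h1, ?_⟩
  rw [ht, Matrix.mul_fin_two, Matrix.mul_fin_two]
  ext i j
  fin_cases i <;> fin_cases j
  · simp; linear_combination h1
  · simp; ring
  · simp; ring
  · simp; linear_combination -z*s^2*h1 - z*hs

lemma nz {F : Type*} [Field F] {z : F} (hz : ¬ IsSquare z) (t : F) : 1 - z*t^2 ≠ 0 := by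
  intro h
  rcases eq_or_ne t 0 with rfl | ht
  · simp at h
  · exact hz ⟨t⁻¹, by field_simp; linear_combination -(1:F)*h⟩

open Classical in
noncomputable def conicEquiv {F : Type*} [Field F] {z : F} (hz : ¬ IsSquare z) (h2 : (2:F) ≠ 0) :
    {p : F × F // p.1^2 - z * p.2^2 = 1} ≃ Option F where
  toFun p := if p.1.1 = -1 then none else some (p.1.2 / (p.1.1 + 1))
  invFun o := o.elim ⟨(-1, 0), by ring⟩ (fun t =>
    ⟨((1 + z*t^2)/(1 - z*t^2), 2*t/(1 - z*t^2)), by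
      have h := nz hz t
      field_simp
      ring⟩)
  left_inv p := by
    obtain ⟨⟨a, b⟩, hp⟩ := p
    simp only at hp ⊢
    by_cases ha : a = -1
    · subst ha
      have hb : b = 0 := by
        have h0 : z * b^2 = 0 := by linear_combination -(1:F)*hp
        rcases mul_eq_zero.1 h0 with h | h
        · exact absurd (h ▸ ⟨0, by simp⟩ : IsSquare z) hz
        · exact pow_eq_zero_iff (n := 2) (by norm_num) |>.1 h
      simp [hb]
    · have ha1 : a + 1 ≠ 0 := fun h => ha (by linear_combination h)
      have key : 1 - z * (b/(a+1))^2 = 2/(a+1) := by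
        field_simp
        linear_combination hp
      have key2 : 1 + z * (b/(a+1))^2 = 2*a/(a+1) := by
        field_simp
        linear_combination -hp
      simp only [ha, if_false, Option.elim]
      apply Subtype.ext
      apply Prod.ext <;> simp only
      · rw [key, key2]; field_simp
      · rw [key]; field_simp
  right_inv o := by
    rcases o with _ | t
    · simp
    · have h := nz hz t
      simp only [Option.elim]
      refine (if_neg ?_).trans ?_
      swap
      · congr 1
        have hx1 : (1 + z*t^2)/(1 - z*t^2) + 1 = 2/(1 - z*t^2) := by field_simp; ring
        rw [hx1]
        field_simp
        exact mul_div_cancel_right₀ t (by rw [mul_comm]; exact h)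
      · intro hc
        rw [div_eq_iff h] at hc
        exact h2 (by linear_combination hc)
theorem stmt_3 (F : Type*) [Field F] [Fintype F] (q : ℕ)
    (hq : Fintype.card F = q) (hodd : Odd q) (z : F) (hz : ¬ IsSquare z)
    (Δ : Matrix (Fin 2) (Fin 2) F) (hΔ : Δ = !![1, 0; 0, -z]) :
    Nat.card {T : Matrix (Fin 2) (Fin 2) F // IsUnit T.det ∧ T * Δ * Tᵀ = Δ}
      = 2 * (q + 1) := by
  classical
  subst hΔ
  have h2 : (2:F) ≠ 0 := by
    intro h
    have hd : ringChar F ∣ 2 := ringChar.dvd (by exact_mod_cast h)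
    rcases (Nat.dvd_prime Nat.prime_two).1 hd with h1 | h1
    · exact CharP.ringChar_ne_one h1
    · have he := FiniteField.even_card_of_char_two h1
      rw [hq] at he
      rw [Nat.odd_iff] at hodd
      omega
  have hz0 : z ≠ 0 := fun h => hz (h ▸ ⟨0, by simp⟩)
  have h1n : (1:F) ≠ -1 := fun h => h2 (by linear_combination h)
  have e : {T : Matrix (Fin 2) (Fin 2) F // IsUnit T.det ∧ T * !![1, 0; 0, -z] * Tᵀ = !![1, 0; 0, -z]}
      ≃ {p : F × F // p.1^2 - z * p.2^2 = 1} × {s : F // s^2 = 1} :=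
    { toFun := fun T => (⟨(T.1 0 0, T.1 0 1), (orth_char hz0 T.1 T.2.2).1⟩,
        ⟨T.1.det, (orth_char hz0 T.1 T.2.2).2.2.2⟩)
      invFun := fun pc =>
        ⟨!![pc.1.1.1, pc.1.1.2; pc.2.1*(z*pc.1.1.2), pc.2.1*pc.1.1.1], by
          obtain ⟨hdet, heq⟩ := orth_mk pc.1.2 pc.2.2
          refine ⟨?_, heq⟩
          rw [hdet]
          refine isUnit_iff_ne_zero.2 (fun h0 => one_ne_zero (α := F) ?_)
          rw [← pc.2.2, h0]; ring
          ⟩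
      left_inv := fun T => by
        obtain ⟨e1, hc, hd, hdet⟩ := orth_char hz0 T.1 T.2.2
        apply Subtype.ext
        simp only
        conv_rhs => rw [Matrix.eta_fin_two T.1]
        rw [hc, hd]
      right_inv := fun pc => by
        obtain ⟨hdet, heq⟩ := orth_mk pc.1.2 pc.2.2
        refine Prod.ext (Subtype.ext ?_) (Subtype.ext ?_)
        · simp
        · simpa using hdet }
  rw [Nat.card_congr e, Nat.card_prod, Nat.card_congr (conicEquiv hz h2)]
  have hsq : {s : F | s^2 = 1} = {1, -1} := by
    ext s
    simp only [Set.mem_setOf_eq, Set.mem_insert_iff, Set.mem_singleton_iff]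
    constructor
    · intro h
      rcases mul_eq_zero.1 (show (s - 1) * (s + 1) = 0 by linear_combination h) with h' | h'
      · exact Or.inl (by linear_combination h')
      · exact Or.inr (by linear_combination h')
    · rintro (rfl | rfl) <;> ring
  have hcard2 : Nat.card {s : F // s^2 = 1} = 2 := by
    rw [show {s : F // s^2 = 1} = ↥{s : F | s^2 = 1} from rfl, Nat.card_coe_set_eq, hsq,
      Set.ncard_pair h1n]
  rw [hcard2, Nat.card_eq_fintype_card, Fintype.card_option, hq]
  ring
end

section
/- Let F be a finite field of odd order q, z a non-square in F with 1 - z a non-square, and Δ = diag(1, -z). For any (a, b) ∈ F² with (a, b) ≠ (0, 0), if a² - z·b² is a nonzero square in F, then there exists T ∈ O(2, Δ) and λ ∈ F* such that (a, b)·T = λ·(1, 0); if a² - z·b² is a non-square, then there exists T ∈ O(2, Δ) and λ ∈ F* such that (a, b)·T = λ·(1, 1). -/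
open Matrix

lemma helper_orth (F : Type*) [Field F] (z : F) (a b e f : F)
    (hN : a ^ 2 - z * b ^ 2 = e ^ 2 - z * f ^ 2) (hN0 : a ^ 2 - z * b ^ 2 ≠ 0) :
    ∃ T : Matrix (Fin 2) (Fin 2) F, IsUnit T.det ∧
      T * !![1, 0; 0, -z] * Tᵀ = !![1, 0; 0, -z] ∧ !![a, b] * T = !![e, f] := by
  have hc2 : ((a * e - z * b * f) / (a ^ 2 - z * b ^ 2)) ^ 2 -
      z * ((a * f - b * e) / (a ^ 2 - z * b ^ 2)) ^ 2 = 1 := by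
    field_simp
    linear_combination (z * b ^ 2 - a ^ 2) * hN
  have hv1 : a * ((a * e - z * b * f) / (a ^ 2 - z * b ^ 2)) +
      z * b * ((a * f - b * e) / (a ^ 2 - z * b ^ 2)) = e := by
    field_simp
    ring
  have hv2 : a * ((a * f - b * e) / (a ^ 2 - z * b ^ 2)) +
      b * ((a * e - z * b * f) / (a ^ 2 - z * b ^ 2)) = f := by
    field_simp
    have hN0' : a ^ 2 - b ^ 2 * z ≠ 0 := by intro h; apply hN0; linear_combination h
    field_simp
    ring
  obtain ⟨c, d, hc2, hv1, hv2⟩ : ∃ c d : F, c ^ 2 - z * d ^ 2 = 1 ∧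
      a * c + z * b * d = e ∧ a * d + b * c = f :=
    ⟨_, _, hc2, hv1, hv2⟩
  refine ⟨!![c, d; z * d, c], ?_, ?_, ?_⟩
  · have hdet : (!![c, d; z * d, c]).det = 1 := by
      rw [Matrix.det_fin_two_of]
      linear_combination hc2
    rw [hdet]; exact isUnit_one
  · ext i j
    fin_cases i <;> fin_cases j <;>
      simp [Matrix.mul_apply, Fin.sum_univ_succ, Matrix.transpose_apply, vecHead, vecTail] <;>
      first
        | ring1
        | linear_combination hc2
        | linear_combination z * hc2
        | linear_combination (-z) * hc2
  · ext i j
    fin_cases i <;> fin_cases j <;>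
      simp [Matrix.mul_apply, Fin.sum_univ_succ, vecHead, vecTail] <;>
      first
        | ring1
        | linear_combination hv1
        | linear_combination hv2

theorem stmt_4 (F : Type*) [Field F] [Fintype F] (q : ℕ)
    (hq : Fintype.card F = q) (hodd : Odd q) (z : F) (hz : ¬ IsSquare z)
    (hz1 : ¬ IsSquare (1 - z))
    (Δ : Matrix (Fin 2) (Fin 2) F) (hΔ : Δ = !![1, 0; 0, -z])
    (a b : F) (hab : (a, b) ≠ (0, 0)) :
    ((a ^ 2 - z * b ^ 2 ≠ 0 ∧ IsSquare (a ^ 2 - z * b ^ 2)) →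
      ∃ (T : Matrix (Fin 2) (Fin 2) F) (lam : F), IsUnit T.det ∧ T * Δ * Tᵀ = Δ ∧
        lam ≠ 0 ∧ !![a, b] * T = lam • !![1, 0]) ∧
    (¬ IsSquare (a ^ 2 - z * b ^ 2) →
      ∃ (T : Matrix (Fin 2) (Fin 2) F) (lam : F), IsUnit T.det ∧ T * Δ * Tᵀ = Δ ∧
        lam ≠ 0 ∧ !![a, b] * T = lam • !![1, 1]) := by
  subst hΔ
  constructor
  · rintro ⟨hN0, r, hr⟩
    have hr' : a ^ 2 - z * b ^ 2 = r ^ 2 - z * 0 ^ 2 := by rw [hr]; ring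
    have hr0 : r ≠ 0 := by
      intro h; apply hN0; rw [hr, h]; ring
    obtain ⟨T, hT1, hT2, hT3⟩ := helper_orth F z a b r 0 hr' hN0
    refine ⟨T, r, hT1, hT2, hr0, ?_⟩
    rw [hT3]
    ext i j; fin_cases i <;> fin_cases j <;> simp
  · intro hns
    classical
    have hN0 : a ^ 2 - z * b ^ 2 ≠ 0 := by
      intro h; exact hns (h ▸ IsSquare.zero)
    have hz10 : (1 - z) ≠ 0 := by
      intro h; exact hz1 (h ▸ IsSquare.zero)
    have hs : IsSquare ((a ^ 2 - z * b ^ 2) / (1 - z)) := by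
      have h1 : quadraticChar F (a ^ 2 - z * b ^ 2) = -1 :=
        quadraticChar_neg_one_iff_not_isSquare.mpr hns
      have h2 : quadraticChar F (1 - z) = -1 :=
        quadraticChar_neg_one_iff_not_isSquare.mpr hz1
      have hratio0 : (a ^ 2 - z * b ^ 2) / (1 - z) ≠ 0 := div_ne_zero hN0 hz10
      have hmul : quadraticChar F ((a ^ 2 - z * b ^ 2) / (1 - z)) * quadraticChar F (1 - z)
          = quadraticChar F (a ^ 2 - z * b ^ 2) := by
        rw [← _root_.map_mul]; congr 1; field_simp
      rw [h1, h2] at hmul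
      have : quadraticChar F ((a ^ 2 - z * b ^ 2) / (1 - z)) = 1 := by linarith
      exact (quadraticChar_one_iff_isSquare hratio0).mp this
    obtain ⟨r, hr⟩ := hs
    have hr0 : r ≠ 0 := by
      intro h
      rw [h, mul_zero] at hr
      exact (div_ne_zero hN0 hz10) hr
    have hr' : a ^ 2 - z * b ^ 2 = r ^ 2 - z * r ^ 2 := by
      have h : (a ^ 2 - z * b ^ 2) / (1 - z) = r * r := hr
      field_simp at h
      linear_combination h
    obtain ⟨T, hT1, hT2, hT3⟩ := helper_orth F z a b r r hr' hN0
    refine ⟨T, r, hT1, hT2, hr0, ?_⟩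
    rw [hT3]
    ext i j; fin_cases i <;> fin_cases j <;> simp
end

section
/- Let F be a finite field of odd order q, z a non-square in F, Δ = diag(1, -z), and fix c ∈ F*. Then the number of pairs (T, S) with Tᵗ ∈ Sp₂(F) (i.e., det T = 1 for 2×2 matrices), S ∈ O(2, Δ), and Tᵗ · diag(c, 1) · S = diag(c, 1), is exactly q + 1. -/
open Matrix

private lemma conic_card (F : Type*) [Field F] [Fintype F] (q : ℕ)
    (hq : Fintype.card F = q) (hodd : Odd q) (z : F) (hz : ¬ IsSquare z) :
    Nat.card {v : F × F // v.1 ^ 2 - z * v.2 ^ 2 = 1} = q + 1 := by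
  have hchar : ringChar F ≠ 2 := by
    intro h
    have := (FiniteField.even_card_iff_char_two (F := F)).mp h
    rw [hq] at this
    rcases hodd with ⟨k, rfl⟩
    omega
  have two_ne : (2 : F) ≠ 0 := Ring.two_ne_zero hchar
  have hs : ∀ t : F, 1 - z * t ^ 2 ≠ 0 := by
    intro t h
    rcases eq_or_ne t 0 with rfl | ht
    · simp at h
    · exact hz ⟨t⁻¹, by field_simp; linear_combination -h⟩
  classical
  have e : {v : F × F // v.1 ^ 2 - z * v.2 ^ 2 = 1} ≃ Option F := by
    refine
      { toFun := fun v => if v.1.1 = -1 then none else some (v.1.2 / (v.1.1 + 1))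
        invFun := fun o => o.elim ⟨(-1, 0), by ring⟩ fun t =>
          ⟨((1 + z * t ^ 2) / (1 - z * t ^ 2), 2 * t / (1 - z * t ^ 2)), by
            have h1 := hs t
            field_simp
            ring⟩
        left_inv := ?_, right_inv := ?_ }
    · rintro ⟨⟨a, b⟩, hv⟩
      simp only at hv ⊢
      rcases eq_or_ne a (-1) with rfl | ha
      · have hb : b = 0 := by
          have h0 : z * b ^ 2 = 0 := by linear_combination -hv
          rcases mul_eq_zero.mp h0 with h | h
          · exact absurd (by rw [h]; exact ⟨0, by ring⟩ : IsSquare z) hz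
          · exact pow_eq_zero_iff (n := 2) (by norm_num) |>.mp h
        subst hb
        simp
      · have ha1 : a + 1 ≠ 0 := fun h => ha (by linear_combination h)
        rw [if_neg ha]
        have hst := hs (b / (a + 1))
        apply Subtype.ext
        simp only [Option.elim]
        refine Prod.ext ?_ ?_ <;> simp only <;> rw [div_eq_iff hst] <;> field_simp
        · linear_combination (-(a+1)) * hv
        · linear_combination (-b) * hv
    · rintro (_ | t)
      · simp
      · have h1 := hs t
        simp only [Option.elim]
        have ha : (1 + z * t ^ 2) / (1 - z * t ^ 2) ≠ -1 := by
          intro h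
          rw [div_eq_iff h1] at h
          exact two_ne (by linear_combination h)
        simp only [ha, ↓reduceIte]
        have ha2 : (1 + z * t ^ 2) / (1 - z * t ^ 2) + 1 = 2 / (1 - z * t ^ 2) := by
          field_simp
          ring
        simp only [ha2]
        congr 1
        rw [div_div_div_eq, mul_comm]
        field_simp
  rw [Nat.card_congr e, Nat.card_eq_fintype_card, Fintype.card_option, hq]

private lemma diag_c (F : Type*) [Field F] (c : F) :
    Matrix.diagonal ![c, 1] = !![c, 0; 0, 1] := by
  ext i j; fin_cases i <;> fin_cases j <;> simp [Matrix.diagonal]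

private lemma struct (F : Type*) [Field F] (z c : F) (hc : c ≠ 0)
    (T S : Matrix (Fin 2) (Fin 2) F)
    (h1 : Tᵀ * !![(0:F),1;-1,0] * (Tᵀ)ᵀ = !![0,1;-1,0])
    (h3 : S * !![1,0;0,-z] * Sᵀ = !![1,0;0,-z])
    (h4 : Tᵀ * !![c,0;0,1] * S = !![c,0;0,1]) :
    S = !![S 0 0, S 0 1; z * S 0 1, S 0 0] ∧
    T = !![S 0 0, -(z * S 0 1)/c; -(S 0 1 * c), S 0 0] := by
  have e00 := congrFun (congrFun h3 0) 0
  have e01 := congrFun (congrFun h3 0) 1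
  have e11 := congrFun (congrFun h3 1) 1
  have f01 := congrFun (congrFun h1 0) 1
  have g00 := congrFun (congrFun h4 0) 0
  have g01 := congrFun (congrFun h4 0) 1
  have g10 := congrFun (congrFun h4 1) 0
  have g11 := congrFun (congrFun h4 1) 1
  simp [mul_apply, Fin.sum_univ_two] at e00 e01 e11 f01 g00 g01 g10 g11
  have hdet := congrArg Matrix.det h4
  rw [Matrix.det_mul, Matrix.det_mul, Matrix.det_fin_two_of,
    Matrix.det_fin_two, Matrix.det_fin_two] at hdet
  simp only [Matrix.transpose_apply] at hdet
  have E6 : S 0 0 * S 1 1 - S 0 1 * S 1 0 = 1 := by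
    have h0 : c * ((S 0 0 * S 1 1 - S 0 1 * S 1 0) - 1) = 0 := by
      linear_combination hdet - c * (S 0 0 * S 1 1 - S 0 1 * S 1 0) * f01
    exact sub_eq_zero.mp ((mul_eq_zero.mp h0).resolve_left hc)
  have cd : S 1 1 = S 0 0 := by
    linear_combination -(S 1 1 * e00) + S 0 0 * E6 + S 0 1 * e01
  have ce : S 1 0 = z * S 0 1 := by
    linear_combination -(S 1 0 * E6) - S 0 1 * e11 + S 1 1 * e01
  rw [cd] at g01 g11
  rw [ce] at g00 g10
  have ht00 : T 0 0 = S 0 0 := by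
    have h0 : c * (T 0 0 - S 0 0) = 0 := by
      linear_combination S 0 0 * g00 - z * S 0 1 * g01 - c * T 0 0 * e00
    exact sub_eq_zero.mp ((mul_eq_zero.mp h0).resolve_left hc)
  have ht10 : T 1 0 = -(S 0 1 * c) := by
    linear_combination -(S 0 1 * g00) + S 0 0 * g01 - T 1 0 * e00
  have ht01 : T 0 1 = -(z * S 0 1)/c := by
    rw [eq_div_iff hc]
    linear_combination S 0 0 * g10 - z * S 0 1 * g11 - T 0 1 * c * e00
  have ht11 : T 1 1 = S 0 0 := by
    linear_combination -(S 0 1 * g10) + S 0 0 * g11 - T 1 1 * e00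
  constructor
  · ext i j; fin_cases i <;> fin_cases j <;> simp [ce, cd]
  · ext i j; fin_cases i <;> fin_cases j <;> simp [ht00, ht01, ht10, ht11]

theorem stmt_5 (F : Type*) [Field F] [Fintype F] (q : ℕ)
    (hq : Fintype.card F = q) (hodd : Odd q) (z : F) (hz : ¬ IsSquare z)
    (Δ : Matrix (Fin 2) (Fin 2) F) (hΔ : Δ = !![1, 0; 0, -z])
    (A₂ : Matrix (Fin 2) (Fin 2) F) (hA : A₂ = !![0, 1; -1, 0])
    (c : F) (hc : c ≠ 0) :
    Nat.card {p : Matrix (Fin 2) (Fin 2) F × Matrix (Fin 2) (Fin 2) F //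
      p.1ᵀ * A₂ * (p.1ᵀ)ᵀ = A₂ ∧ IsUnit p.2.det ∧ p.2 * Δ * p.2ᵀ = Δ ∧
      p.1ᵀ * Matrix.diagonal ![c, 1] * p.2 = Matrix.diagonal ![c, 1]}
      = q + 1 := by
  classical
  subst hΔ hA
  rw [diag_c]
  refine Eq.trans (Nat.card_congr ?_) (conic_card F q hq hodd z hz)
  refine
    { toFun := fun p => ⟨(p.1.2 0 0, p.1.2 0 1), ?_⟩
      invFun := fun v =>
        ⟨(!![v.1.1, -(z * v.1.2)/c; -(v.1.2 * c), v.1.1],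
          !![v.1.1, v.1.2; z * v.1.2, v.1.1]), ?_, ?_, ?_, ?_⟩
      left_inv := ?_, right_inv := ?_ }
  · obtain ⟨⟨T, S⟩, h1, h2, h3, h4⟩ := p
    have e00 := congrFun (congrFun h3 0) 0
    simp [mul_apply, Fin.sum_univ_two] at e00
    linear_combination e00
  · obtain ⟨⟨a, b⟩, hv⟩ := v
    simp only at hv
    rw [Matrix.transpose_transpose]
    rw [show (!![a, -(z*b)/c; -(b*c), a])ᵀ = !![a, -(b*c); -(z*b)/c, a] from by
      ext i j; fin_cases i <;> fin_cases j <;> rfl]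
    ext i j
    fin_cases i <;> fin_cases j <;>
      simp [mul_apply, Fin.sum_univ_two] <;>
      first
        | rfl
        | ring1
        | linear_combination hv
        | linear_combination -hv
        | linear_combination c * hv
        | linear_combination -c * hv
        | linear_combination z * hv
        | linear_combination -z * hv
        | (field_simp <;>
            first
              | ring1
              | linear_combination hv
              | linear_combination -hv
              | linear_combination c * hv
              | linear_combination -c * hv
              | linear_combination z * hv
              | linear_combination -z * hv)
  · obtain ⟨⟨a, b⟩, hv⟩ := v
    simp only at hv
    simp only [Matrix.det_fin_two_of]
    have h : a * a - b * (z * b) = 1 := by linear_combination hv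
    rw [h]; exact isUnit_one
  · obtain ⟨⟨a, b⟩, hv⟩ := v
    simp only at hv
    rw [show (!![a, b; z*b, a])ᵀ = !![a, z*b; b, a] from by
      ext i j; fin_cases i <;> fin_cases j <;> rfl]
    ext i j
    fin_cases i <;> fin_cases j <;>
      simp [mul_apply, Fin.sum_univ_two] <;>
      first
        | rfl
        | ring1
        | linear_combination hv
        | linear_combination -hv
        | linear_combination c * hv
        | linear_combination -c * hv
        | linear_combination z * hv
        | linear_combination -z * hv
        | (field_simp <;>
            first
              | ring1
              | linear_combination hv
              | linear_combination -hv
              | linear_combination c * hv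
              | linear_combination -c * hv
              | linear_combination z * hv
              | linear_combination -z * hv)
  · obtain ⟨⟨a, b⟩, hv⟩ := v
    simp only at hv
    rw [show (!![a, -(z*b)/c; -(b*c), a])ᵀ = !![a, -(b*c); -(z*b)/c, a] from by
      ext i j; fin_cases i <;> fin_cases j <;> rfl]
    ext i j
    fin_cases i <;> fin_cases j <;>
      simp [mul_apply, Fin.sum_univ_two] <;>
      first
        | rfl
        | ring1
        | linear_combination hv
        | linear_combination -hv
        | linear_combination c * hv
        | linear_combination -c * hv
        | linear_combination z * hv
        | linear_combination -z * hv
        | (field_simp <;>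
            first
              | ring1
              | linear_combination hv
              | linear_combination -hv
              | linear_combination c * hv
              | linear_combination -c * hv
              | linear_combination z * hv
              | linear_combination -z * hv)
  · rintro ⟨⟨T, S⟩, h1, h2, h3, h4⟩
    obtain ⟨hS, hT⟩ := struct F z c hc T S h1 h3 h4
    simp only
    exact Subtype.ext (Prod.ext hT.symm hS.symm)
  · rintro ⟨⟨a, b⟩, hv⟩
    simp
end

section
/- Let F be a finite field of odd order q, and let O₁ ≤ GLν(F) be the group of ν×ν invertible lower block-triangular matrices [[T₁₁, 0],[T₂₁, T₂₂]] with T₁₁ ∈ GL₁(F) and T₂₂ ∈ GL_{ν-1}(F), acting on the set of ν×ν alternate matrices by X ↦ Tᵗ·X·T. Then the two matrices [0, A_{2r}, 0^{(ν-2r-1)}] and [A_{2r}, 0^{(ν-2r)}] (block-diagonal, where A_{2r} is the direct sum of r copies of [[0,1],[-1,0]]) lie in distinct orbits for each valid r ≥ 1. -/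
open Matrix

-- `sympBlock F ν s r`: block diagonal with a zero block of size `s`, then
-- `r` copies of `[[0,1],[-1,0]]` starting at index `s`, then zeros.
open scoped Classical in
noncomputable def sympBlock (F : Type*) [Field F] (ν s r : ℕ) :
    Matrix (Fin ν) (Fin ν) F := fun i j =>
  if ∃ k, k < r ∧ (i : ℕ) = s + 2 * k ∧ (j : ℕ) = s + 2 * k + 1 then 1
  else if ∃ k, k < r ∧ (i : ℕ) = s + 2 * k + 1 ∧ (j : ℕ) = s + 2 * k then -1
  else 0

section Aux

variable {F : Type*} [Field F]

lemma sympBlock_row_even {ν s r k : ℕ} (hk : k < r) (i l : Fin ν)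
    (hi : (i : ℕ) = s + 2 * k) :
    sympBlock F ν s r i l = if (l : ℕ) = s + 2 * k + 1 then 1 else 0 := by
  unfold sympBlock
  by_cases hl : (l : ℕ) = s + 2 * k + 1
  · rw [if_pos ⟨k, hk, hi, hl⟩, if_pos hl]
  · rw [if_neg, if_neg, if_neg hl]
    · rintro ⟨k', hk', hik', hlk'⟩; omega
    · rintro ⟨k', hk', hik', hlk'⟩; omega

lemma sympBlock_row_odd {ν s r k : ℕ} (hk : k < r) (i l : Fin ν)
    (hi : (i : ℕ) = s + 2 * k + 1) :
    sympBlock F ν s r i l = if (l : ℕ) = s + 2 * k then -1 else 0 := by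
  unfold sympBlock
  by_cases hl : (l : ℕ) = s + 2 * k
  · rw [if_neg, if_pos ⟨k, hk, hi, hl⟩, if_pos hl]
    rintro ⟨k', hk', hik', hlk'⟩; omega
  · rw [if_neg, if_neg, if_neg hl]
    · rintro ⟨k', hk', hik', hlk'⟩; omega
    · rintro ⟨k', hk', hik', hlk'⟩; omega

lemma sympBlock_row_out {ν s r : ℕ} (i l : Fin ν)
    (hi : ¬ (s ≤ (i : ℕ) ∧ (i : ℕ) < s + 2 * r)) :
    sympBlock F ν s r i l = 0 := by
  unfold sympBlock
  rw [if_neg, if_neg]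
  · rintro ⟨k', hk', hik', hlk'⟩; omega
  · rintro ⟨k', hk', hik', hlk'⟩; omega

lemma sympBlock_mul_transpose {ν s r : ℕ} (h : s + 2 * r ≤ ν) :
    sympBlock F ν s r * (sympBlock F ν s r)ᵀ =
      Matrix.diagonal (fun i : Fin ν =>
        if s ≤ (i : ℕ) ∧ (i : ℕ) < s + 2 * r then (1 : F) else 0) := by
  ext i j
  rw [Matrix.mul_apply, Matrix.diagonal_apply]
  simp only [Matrix.transpose_apply]
  by_cases hi : s ≤ (i : ℕ) ∧ (i : ℕ) < s + 2 * r
  · -- sum equals `if i = j then 1 else 0`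
    obtain ⟨k, hk, hik⟩ : ∃ k, k < r ∧
        (((i : ℕ) = s + 2 * k) ∨ ((i : ℕ) = s + 2 * k + 1)) :=
      ⟨((i : ℕ) - s) / 2, by omega⟩
    have hval : ∀ c : Fin ν, i ≠ j →
        ((i : ℕ) + (c : ℕ) = 2 * (s + 2 * k) + 1) → sympBlock F ν s r j c = 0 := by
      intro c hij' hcv
      by_cases hj : s ≤ (j : ℕ) ∧ (j : ℕ) < s + 2 * r
      · obtain ⟨k', hk', hjk⟩ : ∃ k', k' < r ∧
            (((j : ℕ) = s + 2 * k') ∨ ((j : ℕ) = s + 2 * k' + 1)) :=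
          ⟨((j : ℕ) - s) / 2, by omega⟩
        have hijv : (i : ℕ) ≠ (j : ℕ) := fun hv => hij' (Fin.ext hv)
        rcases hjk with hjk | hjk
        · rw [sympBlock_row_even hk' j c hjk]
          rcases hik with hik | hik <;> rw [if_neg (by omega)]
        · rw [sympBlock_row_odd hk' j c hjk]
          rcases hik with hik | hik <;> rw [if_neg (by omega)]
      · exact sympBlock_row_out j c hj
    rcases hik with hik | hik
    · have hc : s + 2 * k + 1 < ν := by omega
      have hsum : ∑ l, sympBlock F ν s r i l * sympBlock F ν s r j l
          = sympBlock F ν s r j ⟨s + 2 * k + 1, hc⟩ := by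
        rw [Finset.sum_eq_single (⟨s + 2 * k + 1, hc⟩ : Fin ν)]
        · rw [sympBlock_row_even hk i _ hik, if_pos rfl, one_mul]
        · intro b _ hb
          rw [sympBlock_row_even hk i b hik, if_neg, zero_mul]
          intro hbv; exact hb (Fin.ext hbv)
        · intro hmem; exact absurd (Finset.mem_univ _) hmem
      rw [hsum]
      by_cases hij : i = j
      · rw [if_pos hij, if_pos hi, ← hij, sympBlock_row_even hk i _ hik, if_pos rfl]
      · rw [if_neg hij]
        exact hval ⟨s + 2 * k + 1, hc⟩ hij (by simp only [Fin.val_mk]; omega)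
    · have hc : s + 2 * k < ν := by omega
      have hsum : ∑ l, sympBlock F ν s r i l * sympBlock F ν s r j l
          = - sympBlock F ν s r j ⟨s + 2 * k, hc⟩ := by
        rw [Finset.sum_eq_single (⟨s + 2 * k, hc⟩ : Fin ν)]
        · rw [sympBlock_row_odd hk i _ hik, if_pos rfl, neg_one_mul]
        · intro b _ hb
          rw [sympBlock_row_odd hk i b hik, if_neg, zero_mul]
          intro hbv; exact hb (Fin.ext hbv)
        · intro hmem; exact absurd (Finset.mem_univ _) hmem
      rw [hsum]
      by_cases hij : i = j
      · rw [if_pos hij, if_pos hi, ← hij, sympBlock_row_odd hk i _ hik, if_pos rfl, neg_neg]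
      · rw [if_neg hij]
        rw [hval ⟨s + 2 * k, hc⟩ hij (by simp only [Fin.val_mk]; omega), neg_zero]
  · have hz : ∀ l, sympBlock F ν s r i l * sympBlock F ν s r j l = 0 := by
      intro l; rw [sympBlock_row_out i l hi, zero_mul]
    rw [Finset.sum_congr rfl fun l _ => hz l, Finset.sum_const_zero]
    by_cases hij : i = j
    · rw [if_pos hij, if_neg hi]
    · rw [if_neg hij]

lemma sympBlock_eq_diag_mul {ν s r : ℕ} :
    Matrix.diagonal (fun i : Fin ν =>
        if s ≤ (i : ℕ) ∧ (i : ℕ) < s + 2 * r then (1 : F) else 0) *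
      sympBlock F ν s r = sympBlock F ν s r := by
  ext i j
  rw [Matrix.diagonal_mul]
  by_cases hi : s ≤ (i : ℕ) ∧ (i : ℕ) < s + 2 * r
  · rw [if_pos hi, one_mul]
  · rw [if_neg hi, zero_mul, sympBlock_row_out i j hi]

lemma rank_sympBlock {ν s r : ℕ} (h : s + 2 * r ≤ ν) :
    (sympBlock F ν s r).rank = 2 * r := by
  classical
  set d : Fin ν → F := fun i => if s ≤ (i : ℕ) ∧ (i : ℕ) < s + 2 * r then (1 : F) else 0 with hd
  have hD : (Matrix.diagonal d).rank = 2 * r := by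
    rw [Matrix.rank_diagonal]
    have he2 : ∀ i : Fin ν, d i ≠ 0 ↔ (s ≤ (i : ℕ) ∧ (i : ℕ) < s + 2 * r) := by
      intro i
      by_cases hc : s ≤ (i : ℕ) ∧ (i : ℕ) < s + 2 * r
      · rw [hd]; simp only [if_pos hc]
        exact ⟨fun _ => hc, fun _ => one_ne_zero⟩
      · rw [hd]; simp only [if_neg hc]
        exact ⟨fun hz => absurd rfl hz, fun hcc => absurd hcc hc⟩
    have he : {i : Fin ν // s ≤ (i : ℕ) ∧ (i : ℕ) < s + 2 * r} ≃ Fin (2 * r) :=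
      { toFun := fun x => ⟨(x.1 : ℕ) - s, by have := x.2; omega⟩
        invFun := fun y => ⟨⟨s + (y : ℕ), by have := y.isLt; omega⟩, by
          constructor
          · show s ≤ s + (y : ℕ); omega
          · show s + (y : ℕ) < s + 2 * r; have := y.isLt; omega⟩
        left_inv := fun x => by
          apply Subtype.ext; apply Fin.ext
          show s + ((x.1 : ℕ) - s) = (x.1 : ℕ)
          have := x.2; omega
        right_inv := fun y => by
          apply Fin.ext
          show s + (y : ℕ) - s = (y : ℕ); omega }
    rw [Fintype.card_congr ((Equiv.subtypeEquivRight he2).trans he), Fintype.card_fin]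
  have h1 : (sympBlock F ν s r).rank ≤ 2 * r := by
    calc (sympBlock F ν s r).rank
        = (Matrix.diagonal d * sympBlock F ν s r).rank := by rw [sympBlock_eq_diag_mul]
      _ ≤ (Matrix.diagonal d).rank := Matrix.rank_mul_le_left _ _
      _ = 2 * r := hD
  have h2 : 2 * r ≤ (sympBlock F ν s r).rank := by
    calc 2 * r = (Matrix.diagonal d).rank := hD.symm
      _ = (sympBlock F ν s r * (sympBlock F ν s r)ᵀ).rank := by
          rw [sympBlock_mul_transpose h]
      _ ≤ (sympBlock F ν s r).rank := Matrix.rank_mul_le_left _ _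
  omega

lemma submatrix_sympBlock_succ {ν s r : ℕ} :
    (sympBlock F (ν + 1) (s + 1) r).submatrix Fin.succ Fin.succ = sympBlock F ν s r := by
  ext i j
  simp only [Matrix.submatrix_apply]
  unfold sympBlock
  have h1 : (∃ k, k < r ∧ ((i.succ : ℕ)) = s + 1 + 2 * k ∧ ((j.succ : ℕ)) = s + 1 + 2 * k + 1)
      ↔ (∃ k, k < r ∧ ((i : ℕ)) = s + 2 * k ∧ ((j : ℕ)) = s + 2 * k + 1) := by
    simp only [Fin.val_succ]
    constructor <;> rintro ⟨k, h1, h2, h3⟩ <;> exact ⟨k, h1, by omega, by omega⟩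
  have h2 : (∃ k, k < r ∧ ((i.succ : ℕ)) = s + 1 + 2 * k + 1 ∧ ((j.succ : ℕ)) = s + 1 + 2 * k)
      ↔ (∃ k, k < r ∧ ((i : ℕ)) = s + 2 * k + 1 ∧ ((j : ℕ)) = s + 2 * k) := by
    simp only [Fin.val_succ]
    constructor <;> rintro ⟨k, h1, h2, h3⟩ <;> exact ⟨k, h1, by omega, by omega⟩
  rw [if_congr h1 rfl (if_congr h2 rfl rfl)]

lemma submatrix_sympBlock_zero {ν r : ℕ} :
    (sympBlock F (ν + 1) 0 r).submatrix Fin.succ Fin.succ = sympBlock F ν 1 (r - 1) := by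
  ext i j
  simp only [Matrix.submatrix_apply]
  unfold sympBlock
  have h1 : (∃ k, k < r ∧ ((i.succ : ℕ)) = 0 + 2 * k ∧ ((j.succ : ℕ)) = 0 + 2 * k + 1)
      ↔ (∃ k, k < r - 1 ∧ ((i : ℕ)) = 1 + 2 * k ∧ ((j : ℕ)) = 1 + 2 * k + 1) := by
    simp only [Fin.val_succ]
    constructor
    · rintro ⟨k, h1, h2, h3⟩; exact ⟨k - 1, by omega, by omega, by omega⟩
    · rintro ⟨k, h1, h2, h3⟩; exact ⟨k + 1, by omega, by omega, by omega⟩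
  have h2 : (∃ k, k < r ∧ ((i.succ : ℕ)) = 0 + 2 * k + 1 ∧ ((j.succ : ℕ)) = 0 + 2 * k)
      ↔ (∃ k, k < r - 1 ∧ ((i : ℕ)) = 1 + 2 * k + 1 ∧ ((j : ℕ)) = 1 + 2 * k) := by
    simp only [Fin.val_succ]
    constructor
    · rintro ⟨k, h1, h2, h3⟩; exact ⟨k - 1, by omega, by omega, by omega⟩
    · rintro ⟨k, h1, h2, h3⟩; exact ⟨k + 1, by omega, by omega, by omega⟩
  rw [if_congr h1 rfl (if_congr h2 rfl rfl)]

lemma submatrix_conj_succ {m : ℕ} (T A : Matrix (Fin (m + 1)) (Fin (m + 1)) F)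
    (hT0 : ∀ j : Fin (m + 1), j ≠ 0 → T 0 j = 0) :
    (Tᵀ * A * T).submatrix Fin.succ Fin.succ =
      (T.submatrix Fin.succ Fin.succ)ᵀ * A.submatrix Fin.succ Fin.succ *
        T.submatrix Fin.succ Fin.succ := by
  have h0 : ∀ j : Fin m, T 0 j.succ = 0 := fun j => hT0 _ (Fin.succ_ne_zero j)
  ext i j
  simp only [Matrix.submatrix_apply, Matrix.mul_apply, Matrix.transpose_apply,
    Fin.sum_univ_succ, h0, zero_mul, mul_zero, zero_add, add_zero,
    Finset.sum_const_zero, Finset.sum_mul, Finset.mul_sum]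

end Aux

theorem stmt_8 (F : Type*) [Field F] [Fintype F] (q : ℕ)
    (hq : Fintype.card F = q) (hodd : Odd q) (m r : ℕ)
    (hr : 1 ≤ r) (hν : 2 * r + 1 ≤ m + 1) :
    ¬ ∃ T : Matrix (Fin (m + 1)) (Fin (m + 1)) F,
        IsUnit T.det ∧ (∀ j : Fin (m + 1), j ≠ 0 → T 0 j = 0) ∧
        Tᵀ * sympBlock F (m + 1) 1 r * T = sympBlock F (m + 1) 0 r := by
  rintro ⟨T, hdet, hT0, hXT⟩
  set S := T.submatrix Fin.succ Fin.succ with hS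
  -- det T = T 0 0 * det S
  have hdetT : T.det = T 0 0 * S.det := by
    rw [Matrix.det_succ_row_zero]
    rw [Fin.sum_univ_succ]
    have hzero : ∀ j : Fin m, (-1 : F) ^ ((j.succ : Fin (m + 1)) : ℕ) * T 0 j.succ *
        (T.submatrix Fin.succ (Fin.succAbove j.succ)).det = 0 := by
      intro j; rw [hT0 _ (Fin.succ_ne_zero j), mul_zero, zero_mul]
    rw [Finset.sum_congr rfl fun j _ => hzero j, Finset.sum_const_zero, add_zero]
    simp [Fin.succAbove_zero, hS]
  have hdetS : IsUnit S.det := by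
    rw [hdetT] at hdet
    exact isUnit_of_mul_isUnit_right hdet
  have hkey := congrArg (fun A => A.submatrix Fin.succ Fin.succ) hXT
  rw [submatrix_conj_succ T _ hT0] at hkey
  have hX' : (sympBlock F (m + 1) 1 r).submatrix Fin.succ Fin.succ = sympBlock F m 0 r := by
    have := submatrix_sympBlock_succ (F := F) (ν := m) (s := 0) (r := r)
    simpa using this
  have hY' : (sympBlock F (m + 1) 0 r).submatrix Fin.succ Fin.succ
      = sympBlock F m 1 (r - 1) := submatrix_sympBlock_zero
  rw [hX', hY'] at hkey
  have hrank : (sympBlock F m 1 (r - 1)).rank = (sympBlock F m 0 r).rank := by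
    rw [← hkey, Matrix.rank_mul_eq_left_of_isUnit_det _ _ hdetS,
      Matrix.rank_mul_eq_right_of_isUnit_det _ _ (by rwa [Matrix.det_transpose])]
  rw [rank_sympBlock (by omega), rank_sympBlock (by omega)] at hrank
  omega
end

section
/- Let F be a finite field of odd order q, z a non-square with 1-z non-square, Δ = diag(1,-z), and ν ≥ 1. Identify the last subconstituent Λ with the set of pairs {(A, Z) : A ∈ Mν(F), Z ∈ M_{ν×2}(F), A + Aᵗ + Z·Δ·Zᵗ = 0}, where (A,Z) and (A',Z') are adjacent iff rank(A - A' | Z - Z') = 1. Then Λ is a regular graph of valency (q^ν - 1)(q + 1). -/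
open Matrix

section RankOne

variable {K : Type*} [Field K] {m n : Type*} [Fintype m] [Fintype n] [DecidableEq n]

lemma my_rank_one_decomp {M : Matrix m n K} (h : M.rank = 1) :
    ∃ c r, c ≠ 0 ∧ r ≠ 0 ∧ M = vecMulVec c r := by
  have h' := h
  rw [Matrix.rank] at h'
  obtain ⟨v₀, hv₀, hgen⟩ := finrank_eq_one_iff'.mp h'
  have hcol : ∀ j : n, ∃ t : K, t • (v₀ : m → K) = fun i => M i j := by
    intro j
    obtain ⟨t, ht⟩ := hgen ⟨M.mulVecLin (Pi.single j 1), LinearMap.mem_range_self _ _⟩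
    refine ⟨t, ?_⟩
    have h2 := congrArg Subtype.val ht
    exact (by simpa [Matrix.mulVecLin_apply] using h2 : t • (v₀ : m → K) = M.col j)
  choose r hr using hcol
  have hM : M = vecMulVec (v₀ : m → K) r := by
    ext i j
    have h3 := congrFun (hr j) i
    simp only [Pi.smul_apply, smul_eq_mul] at h3
    rw [vecMulVec_apply, ← h3, mul_comm]
  refine ⟨v₀, r, by simpa using hv₀, ?_, hM⟩
  rintro rfl
  rw [show M = 0 by ext i j; simp [hM, vecMulVec_apply], Matrix.rank_zero] at h
  exact one_ne_zero h.symm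

lemma my_rank_vecMulVec_one [DecidableEq m] {c : m → K} {r : n → K}
    (hc : c ≠ 0) (hr : r ≠ 0) : (vecMulVec c r).rank = 1 := by
  refine le_antisymm ?_ ?_
  · calc (vecMulVec c r).rank = (replicateCol Unit c * replicateRow Unit r).rank := by rw [vecMulVec_eq Unit]
      _ ≤ (replicateCol Unit c).rank := rank_mul_le_left _ _
      _ ≤ Fintype.card Unit := rank_le_card_width _
      _ = 1 := Fintype.card_unit
  · rw [Nat.one_le_iff_ne_zero]
    intro h0
    rw [Matrix.rank, Submodule.finrank_eq_zero] at h0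
    obtain ⟨j, hj⟩ := Function.ne_iff.mp hr
    obtain ⟨i, hi⟩ := Function.ne_iff.mp hc
    simp only [Pi.zero_apply] at hj hi
    have hmem : (vecMulVec c r).mulVecLin (Pi.single j 1) ∈
        LinearMap.range (vecMulVec c r).mulVecLin := LinearMap.mem_range_self _ _
    rw [h0, Submodule.mem_bot] at hmem
    have h4 := congrFun hmem i
    simp only [Matrix.mulVecLin_apply, Matrix.mulVec_single, vecMulVec_apply, mul_one,
      Pi.zero_apply] at h4
    exact mul_ne_zero hi hj (by simpa [vecMulVec_apply] using h4)

end RankOne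

section Core

variable {F : Type*} [Field F] {ν : ℕ}

lemma my_rel {Δ : Matrix (Fin 2) (Fin 2) F}
    {A A' : Matrix (Fin ν) (Fin ν) F} {Z Z' : Matrix (Fin ν) (Fin 2) F}
    (hv : A + Aᵀ + Z * Δ * Zᵀ = 0) (hw : A' + A'ᵀ + Z' * Δ * Z'ᵀ = 0) :
    (A - A') + (A - A')ᵀ
      = (Z - Z') * Δ * (Z - Z')ᵀ - (Z - Z') * Δ * Zᵀ - Z * Δ * (Z - Z')ᵀ := by
  have key : ((A - A') + (A - A')ᵀ)
      - ((Z - Z') * Δ * (Z - Z')ᵀ - (Z - Z') * Δ * Zᵀ - Z * Δ * (Z - Z')ᵀ)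
      = (A + Aᵀ + Z * Δ * Zᵀ) - (A' + A'ᵀ + Z' * Δ * Z'ᵀ) := by
    simp only [Matrix.transpose_sub, Matrix.sub_mul, Matrix.mul_sub]
    abel
  rw [hv, hw, sub_zero] at key
  exact sub_eq_zero.mp key

lemma my_vert (h2 : (2 : F) ≠ 0) {Δ : Matrix (Fin 2) (Fin 2) F} (hΔT : Δᵀ = Δ)
    {A : Matrix (Fin ν) (Fin ν) F} {Z W : Matrix (Fin ν) (Fin 2) F}
    (hv : A + Aᵀ + Z * Δ * Zᵀ = 0) :
    (A - ((2:F)⁻¹ • (W * Δ * Wᵀ) - W * Δ * Zᵀ))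
      + (A - ((2:F)⁻¹ • (W * Δ * Wᵀ) - W * Δ * Zᵀ))ᵀ
      + (Z - W) * Δ * (Z - W)ᵀ = 0 := by
  have hhalf : (2:F)⁻¹ • (W * Δ * Wᵀ) + (2:F)⁻¹ • (W * Δ * Wᵀ) = W * Δ * Wᵀ := by
    rw [← add_smul, ← two_mul, mul_inv_cancel₀ h2, one_smul]
  have key : (A - ((2:F)⁻¹ • (W * Δ * Wᵀ) - W * Δ * Zᵀ))
      + (A - ((2:F)⁻¹ • (W * Δ * Wᵀ) - W * Δ * Zᵀ))ᵀ
      + (Z - W) * Δ * (Z - W)ᵀ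
      = (A + Aᵀ + Z * Δ * Zᵀ)
        + (W * Δ * Wᵀ - ((2:F)⁻¹ • (W * Δ * Wᵀ) + (2:F)⁻¹ • (W * Δ * Wᵀ))) := by
    simp only [Matrix.transpose_sub, Matrix.transpose_add, Matrix.transpose_smul,
      Matrix.transpose_mul, Matrix.transpose_transpose, hΔT, Matrix.sub_mul, Matrix.mul_sub,
      Matrix.mul_assoc]
    abel
  rw [hv, hhalf] at key
  simpa using key

lemma my_core (h2 : (2 : F) ≠ 0) (z : F) (Z : Matrix (Fin ν) (Fin 2) F)
    (B : Matrix (Fin ν) (Fin ν) F) (W : Matrix (Fin ν) (Fin 2) F)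
    (hBW : B + Bᵀ = W * !![1, 0; 0, -z] * Wᵀ - W * !![1, 0; 0, -z] * Zᵀ
      - Z * !![1, 0; 0, -z] * Wᵀ)
    (hr : (fromCols B W).rank = 1) :
    W.rank = 1 ∧ B = (2:F)⁻¹ • (W * !![1, 0; 0, -z] * Wᵀ) - W * !![1, 0; 0, -z] * Zᵀ := by
  classical
  obtain ⟨x, ρ, hx, hρ, hM⟩ := my_rank_one_decomp hr
  set u : Fin ν → F := fun j => ρ (Sum.inl j) with hu
  set ww : Fin 2 → F := fun k => ρ (Sum.inr k) with hwwdef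
  have hB : ∀ i j, B i j = x i * u j := by
    intro i j
    have := congrFun (congrFun hM i) (Sum.inl j)
    simpa [vecMulVec_apply] using this
  have hW : ∀ i k, W i k = x i * ww k := by
    intro i k
    have := congrFun (congrFun hM i) (Sum.inr k)
    simpa [vecMulVec_apply] using this
  obtain ⟨i₀, hi₀⟩ := Function.ne_iff.mp hx
  simp only [Pi.zero_apply] at hi₀
  have d00 : (!![1, 0; 0, -z] : Matrix (Fin 2) (Fin 2) F) 0 0 = 1 := rfl
  have d01 : (!![1, 0; 0, -z] : Matrix (Fin 2) (Fin 2) F) 0 1 = 0 := rfl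
  have d10 : (!![1, 0; 0, -z] : Matrix (Fin 2) (Fin 2) F) 1 0 = 0 := rfl
  have d11 : (!![1, 0; 0, -z] : Matrix (Fin 2) (Fin 2) F) 1 1 = -z := rfl
  have hE : ∀ i j, x i * u j + x j * u i =
      x i * x j * (ww 0 * ww 0 - z * (ww 1 * ww 1))
      - x i * (ww 0 * Z j 0 - z * (ww 1 * Z j 1))
      - (ww 0 * Z i 0 - z * (ww 1 * Z i 1)) * x j := by
    intro i j
    have h0 := congrFun (congrFun hBW i) j
    simp only [Matrix.add_apply, Matrix.sub_apply, Matrix.transpose_apply, Matrix.mul_apply,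
      Fin.sum_univ_two, Matrix.cons_val', Matrix.cons_val_zero, Matrix.cons_val_one,
      Matrix.head_cons, Matrix.empty_val', Matrix.cons_val_fin_one, Matrix.head_fin_const,
      d00, d01, d10, d11, hB, hW] at h0
    linear_combination h0
  have h2'' : (2:F) * 2⁻¹ = 1 := mul_inv_cancel₀ h2
  have ht0 : u i₀ = (2:F)⁻¹ * (ww 0 * ww 0 - z * (ww 1 * ww 1)) * x i₀
      - (ww 0 * Z i₀ 0 - z * (ww 1 * Z i₀ 1)) := by
    refine mul_left_cancel₀ (mul_ne_zero h2 hi₀ : (2:F) * x i₀ ≠ 0) ?_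
    linear_combination hE i₀ i₀ - x i₀ * x i₀ * (ww 0 * ww 0 - z * (ww 1 * ww 1)) * h2''
  have ht : ∀ j, u j = (2:F)⁻¹ * (ww 0 * ww 0 - z * (ww 1 * ww 1)) * x j
      - (ww 0 * Z j 0 - z * (ww 1 * Z j 1)) := by
    intro j
    refine mul_left_cancel₀ hi₀ ?_
    linear_combination hE i₀ j - x j * ht0
      - x i₀ * x j * (ww 0 * ww 0 - z * (ww 1 * ww 1)) * h2''
  have hwwne : ww ≠ 0 := by
    intro h
    apply hρ
    funext k
    cases k with
    | inl j =>
      have h5 := ht j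
      rw [congrFun h 0, congrFun h 1] at h5
      simpa using h5
    | inr k => exact congrFun h k
  constructor
  · have hWeq : W = vecMulVec x ww := by
      ext i k; rw [hW]; rfl
    rw [hWeq]
    exact my_rank_vecMulVec_one hx hwwne
  · ext i j
    simp only [Matrix.sub_apply, Matrix.smul_apply, Matrix.mul_apply, Fin.sum_univ_two,
      Matrix.cons_val', Matrix.cons_val_zero, Matrix.cons_val_one, Matrix.head_cons,
      Matrix.empty_val', Matrix.cons_val_fin_one, Matrix.head_fin_const,
      d00, d01, d10, d11, Matrix.transpose_apply, smul_eq_mul, hB, hW]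
    linear_combination x i * ht j

lemma my_rank_fc (Z W : Matrix (Fin ν) (Fin 2) F) (Δ : Matrix (Fin 2) (Fin 2) F)
    (hW : W.rank = 1) :
    (fromCols ((2:F)⁻¹ • (W * Δ * Wᵀ) - W * Δ * Zᵀ) W).rank = 1 := by
  have hfac : fromCols ((2:F)⁻¹ • (W * Δ * Wᵀ) - W * Δ * Zᵀ) W
      = W * fromCols ((2:F)⁻¹ • (Δ * Wᵀ) - Δ * Zᵀ) (1 : Matrix (Fin 2) (Fin 2) F) := by
    rw [mul_fromCols, Matrix.mul_one, Matrix.mul_sub, Matrix.mul_smul, Matrix.mul_assoc,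
      Matrix.mul_assoc]
  have hW2 : W = (fromCols ((2:F)⁻¹ • (W * Δ * Wᵀ) - W * Δ * Zᵀ) W)
      * fromRows (0 : Matrix (Fin ν) (Fin 2) F) (1 : Matrix (Fin 2) (Fin 2) F) := by
    rw [fromCols_mul_fromRows, Matrix.mul_zero, Matrix.mul_one, zero_add]
  refine le_antisymm ?_ ?_
  · rw [hfac]
    conv_rhs => rw [← hW]
    exact rank_mul_le_left _ _
  · conv_lhs => rw [← hW]
    conv_lhs => rw [hW2]
    exact rank_mul_le_left _ _

end Core

section Count

variable {F : Type*} [Field F] [Fintype F] {ν : ℕ}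

lemma my_card_ne_zero : Nat.card {x : Fin ν → F // x ≠ 0} = Fintype.card F ^ ν - 1 := by
  classical
  rw [Nat.card_eq_fintype_card]
  rw [Fintype.card_subtype_compl, Fintype.card_subtype_eq (0 : Fin ν → F)]
  simp [Fintype.card_fun]

noncomputable def my_f (F : Type*) [Field F] (ν : ℕ) :
    ({x : Fin ν → F // x ≠ 0} × F) ⊕ {x : Fin ν → F // x ≠ 0}
      → {W : Matrix (Fin ν) (Fin 2) F // W.rank = 1}
  | .inl (x, t) => ⟨vecMulVec x.1 ![1, t], by
      classical
      refine my_rank_vecMulVec_one x.2 ?_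
      intro h
      simpa using congrFun h 0⟩
  | .inr x => ⟨vecMulVec x.1 ![0, 1], by
      classical
      refine my_rank_vecMulVec_one x.2 ?_
      intro h
      simpa using congrFun h 1⟩

lemma my_f_bij : Function.Bijective (my_f F ν) := by
  classical
  constructor
  · rintro (⟨⟨x, hx⟩, t⟩ | ⟨x, hx⟩) (⟨⟨y, hy⟩, s⟩ | ⟨y, hy⟩) h <;>
      simp only [my_f, Subtype.mk.injEq] at h
    · have hxy : x = y := by
        funext i
        have := congrFun (congrFun h i) 0
        simpa [vecMulVec_apply] using this
      subst hxy
      obtain ⟨i, hi⟩ := Function.ne_iff.mp hx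
      simp only [Pi.zero_apply] at hi
      have := congrFun (congrFun h i) 1
      simp only [vecMulVec_apply] at this
      simp only [Matrix.cons_val_one, Matrix.head_cons] at this
      have hts : t = s := mul_left_cancel₀ hi this
      simp [hts]
    · exfalso
      apply hx
      funext i
      have := congrFun (congrFun h i) 0
      simpa [vecMulVec_apply] using this
    · exfalso
      apply hy
      funext i
      have := congrFun (congrFun h i) 0
      simpa [vecMulVec_apply] using this.symm
    · have hxy : x = y := by
        funext i
        have := congrFun (congrFun h i) 1
        simpa [vecMulVec_apply] using this
      simp [hxy]
  · rintro ⟨W, hW⟩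
    obtain ⟨c, r, hc, hr, hM⟩ := my_rank_one_decomp hW
    subst hM
    by_cases h0 : r 0 = 0
    · have h1 : r 1 ≠ 0 := by
        intro h1
        apply hr
        funext k
        fin_cases k <;> assumption
      refine ⟨.inr ⟨r 1 • c, smul_ne_zero h1 hc⟩, ?_⟩
      simp only [my_f]
      refine Subtype.ext ?_
      ext i k
      fin_cases k <;>
        simp [vecMulVec_apply, h0, mul_comm]
    · refine ⟨.inl ⟨⟨r 0 • c, smul_ne_zero h0 hc⟩, r 1 / r 0⟩, ?_⟩
      simp only [my_f]
      refine Subtype.ext ?_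
      ext i k
      fin_cases k
      · simp [vecMulVec_apply, mul_comm]
      · simp only [vecMulVec_apply, Pi.smul_apply, smul_eq_mul]
        show r 0 * c i * (r 1 / r 0) = c i * r 1
        field_simp

lemma my_card_rank_one :
    Nat.card {W : Matrix (Fin ν) (Fin 2) F // W.rank = 1}
      = (Fintype.card F ^ ν - 1) * (Fintype.card F + 1) := by
  classical
  rw [← Nat.card_eq_of_bijective _ (my_f_bij (F := F) (ν := ν))]
  rw [Nat.card_sum, Nat.card_prod, my_card_ne_zero, Nat.card_eq_fintype_card]
  rw [Nat.mul_add, mul_one]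

end Count

theorem stmt_11 (F : Type*) [Field F] [Fintype F] (q : ℕ)
    (hq : Fintype.card F = q) (hodd : Odd q) (z : F) (hz : ¬ IsSquare z)
    (hz1 : ¬ IsSquare (1 - z))
    (Δ : Matrix (Fin 2) (Fin 2) F) (hΔ : Δ = !![1, 0; 0, -z])
    (ν : ℕ) (hν : 1 ≤ ν)
    (v : {p : Matrix (Fin ν) (Fin ν) F × Matrix (Fin ν) (Fin 2) F //
        p.1 + p.1ᵀ + p.2 * Δ * p.2ᵀ = 0}) :
    Nat.card {w : {p : Matrix (Fin ν) (Fin ν) F × Matrix (Fin ν) (Fin 2) F //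
        p.1 + p.1ᵀ + p.2 * Δ * p.2ᵀ = 0} //
        (Matrix.fromCols (v.val.1 - w.val.1) (v.val.2 - w.val.2)).rank = 1}
      = (q ^ ν - 1) * (q + 1) := by
  classical
  subst hq
  subst hΔ
  have h2 : (2 : F) ≠ 0 := by
    intro h
    have hdvd : ringChar F ∣ 2 := ringChar.dvd (by exact_mod_cast h)
    rcases (Nat.prime_two.eq_one_or_self_of_dvd _ hdvd) with h1 | hc2
    · exact CharP.ringChar_ne_one h1
    · have heven := FiniteField.even_card_of_char_two hc2
      have hodd' := Nat.odd_iff.mp hodd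
      omega
  have hsym : (!![1, 0; 0, -z] : Matrix (Fin 2) (Fin 2) F)ᵀ = !![1, 0; 0, -z] := by
    ext i j
    fin_cases i <;> fin_cases j <;> simp [Matrix.transpose_apply]
  obtain ⟨⟨A, Z⟩, hv⟩ := v
  have e : {w : {p : Matrix (Fin ν) (Fin ν) F × Matrix (Fin ν) (Fin 2) F //
        p.1 + p.1ᵀ + p.2 * !![1, 0; 0, -z] * p.2ᵀ = 0} //
        (Matrix.fromCols (A - w.val.1) (Z - w.val.2)).rank = 1}
      ≃ {W : Matrix (Fin ν) (Fin 2) F // W.rank = 1} := by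
    refine
      { toFun := fun w => ⟨Z - w.1.1.2,
          (my_core h2 z Z (A - w.1.1.1) (Z - w.1.1.2) (my_rel hv w.1.2) w.2).1⟩
        invFun := fun W => ⟨⟨⟨A - ((2:F)⁻¹ • (W.1 * !![1, 0; 0, -z] * W.1ᵀ)
            - W.1 * !![1, 0; 0, -z] * Zᵀ), Z - W.1⟩, my_vert h2 hsym hv⟩, ?_⟩
        left_inv := ?_
        right_inv := ?_ }
    · show (Matrix.fromCols
        (A - (A - ((2:F)⁻¹ • (W.1 * !![1, 0; 0, -z] * W.1ᵀ) - W.1 * !![1, 0; 0, -z] * Zᵀ)))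
        (Z - (Z - W.1))).rank = 1
      rw [sub_sub_cancel, sub_sub_cancel]
      exact my_rank_fc Z W.1 _ W.2
    · rintro ⟨⟨⟨A'', Z''⟩, hw⟩, hrk⟩
      have hBform := (my_core h2 z Z (A - A'') (Z - Z'') (my_rel hv hw) hrk).2
      refine Subtype.ext (Subtype.ext ?_)
      show (A - ((2:F)⁻¹ • ((Z - Z'') * !![1, 0; 0, -z] * (Z - Z'')ᵀ)
          - (Z - Z'') * !![1, 0; 0, -z] * Zᵀ), Z - (Z - Z'')) = (A'', Z'')
      rw [← hBform, sub_sub_cancel, sub_sub_cancel]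
    · rintro ⟨W, hW⟩
      exact Subtype.ext (sub_sub_cancel Z W)
  rw [Nat.card_congr e, my_card_rank_one]
end

section
/- Let F be a finite field of odd order q, z a non-square, Δ = diag(1,-z), ν ≥ 1. In the graph Λ with vertex set {(A,Z) ∈ Mν(F) × M_{ν×2}(F) : A + Aᵗ + ZΔZᵗ = 0}, for any vertex R = (A - (1/2)CΔCᵗ, C) with A alternate, the neighborhood of R equals {(A - (1/2)(CΔCᵗ + DΔDᵗ + 2DΔCᵗ), C + D) : D ∈ M_{ν×2}(F), rank D = 1}. -/
open Matrix

section Aux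

variable {F : Type*} [Field F] {ν : ℕ}

lemma aux_range_fromColumns (X : Matrix (Fin ν) (Fin ν) F) (Y : Matrix (Fin ν) (Fin 2) F) :
    LinearMap.range (Matrix.fromCols X Y).mulVecLin
      = LinearMap.range X.mulVecLin ⊔ LinearMap.range Y.mulVecLin := by
  apply le_antisymm
  · rintro v ⟨w, rfl⟩
    have hw : w = Sum.elim (fun i => w (Sum.inl i)) (fun i => w (Sum.inr i)) := by
      funext i; cases i <;> rfl
    rw [Matrix.mulVecLin_apply, hw, Matrix.fromCols_mulVec_sumElim]
    exact Submodule.add_mem _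
      (Submodule.mem_sup_left ⟨_, Matrix.mulVecLin_apply _ _⟩)
      (Submodule.mem_sup_right ⟨_, Matrix.mulVecLin_apply _ _⟩)
  · rw [sup_le_iff]
    constructor
    · rintro v ⟨w, rfl⟩
      exact ⟨Sum.elim w 0, by simp [Matrix.mulVecLin_apply, Matrix.fromCols_mulVec_sumElim]⟩
    · rintro v ⟨w, rfl⟩
      exact ⟨Sum.elim 0 w, by simp [Matrix.mulVecLin_apply, Matrix.fromCols_mulVec_sumElim]⟩

/-- A skew-symmetric matrix of rank at most one is zero (char ≠ 2). -/
lemma aux_skew_rank (h2 : (2 : F) ≠ 0) (M : Matrix (Fin ν) (Fin ν) F)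
    (hskew : Mᵀ = -M) (hr : M.rank ≤ 1) : M = 0 := by
  by_contra hM
  obtain ⟨i, j, hij⟩ : ∃ i j, M i j ≠ 0 := by
    by_contra h; push_neg at h; exact hM (by ext i j; simp [h])
  have hsk : ∀ a b, M b a = - M a b := fun a b => congrFun (congrFun hskew a) b
  have hdiag : ∀ k, M k k = 0 := by
    intro k
    have h := hsk k k
    have h2k : (2 : F) * M k k = 0 := by linear_combination h
    exact (mul_eq_zero.mp h2k).resolve_left h2
  have hji : M j i ≠ 0 := by rw [hsk i j]; simpa using hij
  have hli : LinearIndependent F ![Mᵀ i, Mᵀ j] := by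
    rw [LinearIndependent.pair_iff]
    intro s t hst
    have hsti := congrFun hst i
    have hstj := congrFun hst j
    simp only [Pi.add_apply, Pi.smul_apply, Matrix.transpose_apply, smul_eq_mul,
      Pi.zero_apply, hdiag, mul_zero, zero_add, add_zero] at hsti hstj
    constructor
    · rcases mul_eq_zero.mp hstj with h | h
      · exact h
      · exact absurd h hji
    · rcases mul_eq_zero.mp hsti with h | h
      · exact h
      · exact absurd h hij
  have hsub : Set.range ![Mᵀ i, Mᵀ j] ⊆ Set.range Mᵀ := by
    rintro x ⟨k, rfl⟩
    fin_cases k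
    · exact ⟨i, rfl⟩
    · exact ⟨j, rfl⟩
  have h2le : 2 ≤ M.rank := by
    have := finrank_span_eq_card hli
    rw [M.rank_eq_finrank_span_cols]
    calc 2 = Module.finrank F (Submodule.span F (Set.range ![Mᵀ i, Mᵀ j])) := by
              rw [this]; simp
      _ ≤ Module.finrank F (Submodule.span F (Set.range Mᵀ)) :=
              Submodule.finrank_mono (Submodule.span_mono hsub)
  omega

lemma aux_rank_right_le (X : Matrix (Fin ν) (Fin ν) F) (Y : Matrix (Fin ν) (Fin 2) F) :
    Y.rank ≤ (Matrix.fromCols X Y).rank := by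
  have h : Matrix.fromCols X Y * (Matrix.fromRows 0 1 : Matrix (Fin ν ⊕ Fin 2) (Fin 2) F) = Y := by
    rw [Matrix.fromCols_mul_fromRows]; simp
  calc Y.rank = (Matrix.fromCols X Y * (Matrix.fromRows 0 1 : Matrix (Fin ν ⊕ Fin 2) (Fin 2) F)).rank := by rw [h]
    _ ≤ _ := Matrix.rank_mul_le_left _ _

lemma aux_rank_left_le (X : Matrix (Fin ν) (Fin ν) F) (Y : Matrix (Fin ν) (Fin 2) F) :
    X.rank ≤ (Matrix.fromCols X Y).rank := by
  have h : Matrix.fromCols X Y * (Matrix.fromRows 1 0 : Matrix (Fin ν ⊕ Fin 2) (Fin ν) F) = X := by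
    rw [Matrix.fromCols_mul_fromRows]; simp
  calc X.rank = (Matrix.fromCols X Y * (Matrix.fromRows 1 0 : Matrix (Fin ν ⊕ Fin 2) (Fin ν) F)).rank := by rw [h]
    _ ≤ _ := Matrix.rank_mul_le_left _ _

end Aux

theorem stmt_16 (F : Type*) [Field F] [Fintype F] (q : ℕ)
    (hq : Fintype.card F = q) (hodd : Odd q) (z : F) (hz : ¬ IsSquare z)
    (Δ : Matrix (Fin 2) (Fin 2) F) (hΔ : Δ = !![1, 0; 0, -z])
    (ν : ℕ) (hν : 1 ≤ ν)
    (A : Matrix (Fin ν) (Fin ν) F) (halt : Aᵀ = -A) (hdiag : ∀ i, A i i = 0)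
    (C : Matrix (Fin ν) (Fin 2) F) :
    {p : Matrix (Fin ν) (Fin ν) F × Matrix (Fin ν) (Fin 2) F |
        p.1 + p.1ᵀ + p.2 * Δ * p.2ᵀ = 0 ∧
        (Matrix.fromCols ((A - (2 : F)⁻¹ • (C * Δ * Cᵀ)) - p.1) (C - p.2)).rank = 1}
      = {p : Matrix (Fin ν) (Fin ν) F × Matrix (Fin ν) (Fin 2) F |
          ∃ D : Matrix (Fin ν) (Fin 2) F, D.rank = 1 ∧
            p = (A - (2 : F)⁻¹ • (C * Δ * Cᵀ + D * Δ * Dᵀ + (2 : F) • (D * Δ * Cᵀ)),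
                 C + D)} := by
  have hchar : ringChar F ≠ 2 := by
    intro h
    have := (FiniteField.even_card_iff_char_two (F := F)).mp h
    rw [hq] at this
    rcases hodd with ⟨k, rfl⟩
    omega
  have h2 : (2 : F) ≠ 0 := Ring.two_ne_zero hchar
  have hΔt : Δᵀ = Δ := by
    subst hΔ; ext i j; fin_cases i <;> fin_cases j <;> simp
  have hT : ∀ X Y : Matrix (Fin ν) (Fin 2) F, (X * Δ * Yᵀ)ᵀ = Y * Δ * Xᵀ := by
    intro X Y
    rw [Matrix.transpose_mul, Matrix.transpose_mul, Matrix.transpose_transpose, hΔt,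
      Matrix.mul_assoc]
  ext p
  simp only [Set.mem_setOf_eq]
  constructor
  · rintro ⟨hvertex, hrank⟩
    set D : Matrix (Fin ν) (Fin 2) F := p.2 - C with hDdef
    have hp2 : p.2 = C + D := by rw [hDdef]; abel
    have hCp : C - p.2 = D * (-1 : Matrix (Fin 2) (Fin 2) F) := by rw [Matrix.mul_neg, Matrix.mul_one, hDdef]; abel
    set E : Matrix (Fin ν) (Fin ν) F := (A - (2 : F)⁻¹ • (C * Δ * Cᵀ)) - p.1 with hEdef
    have hp1 : p.1 = (A - (2 : F)⁻¹ • (C * Δ * Cᵀ)) - E := by rw [hEdef]; abel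
    -- the key symmetric-part identity
    have hEE : E + Eᵀ = D * Δ * Dᵀ + D * Δ * Cᵀ + C * Δ * Dᵀ := by
      have hv2 : p.1 + p.1ᵀ = -(p.2 * Δ * p.2ᵀ) := eq_neg_of_add_eq_zero_left hvertex
      have hexp : p.2 * Δ * p.2ᵀ
          = C * Δ * Cᵀ + C * Δ * Dᵀ + D * Δ * Cᵀ + D * Δ * Dᵀ := by
        rw [hp2]
        simp only [Matrix.transpose_add, Matrix.add_mul, Matrix.mul_add]
        abel
      have hEt : Eᵀ = (-A - (2 : F)⁻¹ • (C * Δ * Cᵀ)) - p.1ᵀ := by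
        rw [hEdef, Matrix.transpose_sub, Matrix.transpose_sub, Matrix.transpose_smul,
          hT C C, halt]
      have hsum : E + Eᵀ = -((2 : F)⁻¹ • (C * Δ * Cᵀ)) - ((2 : F)⁻¹ • (C * Δ * Cᵀ))
          - (p.1 + p.1ᵀ) := by rw [hEdef, hEt]; abel
      rw [hsum, hv2, hexp]
      match_scalars <;> (try field_simp) <;> ring
    -- rank facts
    have hDle : D.rank ≤ 1 := by
      have h1 : (Matrix.fromCols E (C - p.2)).rank = 1 := hrank
      have := aux_rank_right_le E (C - p.2)
      have hr : (C - p.2).rank = D.rank := by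
        rw [hCp]
        apply le_antisymm (Matrix.rank_mul_le_left _ _)
        have : D * (-1 : Matrix (Fin 2) (Fin 2) F) * (-1 : Matrix (Fin 2) (Fin 2) F) = D := by
          simp
        calc D.rank
            = (D * (-1 : Matrix (Fin 2) (Fin 2) F) * (-1 : Matrix (Fin 2) (Fin 2) F)).rank := by
              rw [this]
          _ ≤ (D * (-1 : Matrix (Fin 2) (Fin 2) F)).rank := Matrix.rank_mul_le_left _ _
      omega
    have hEle : E.rank ≤ 1 := by
      have := aux_rank_left_le E (C - p.2)
      omega
    -- D ≠ 0
    have hDne : D ≠ 0 := by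
      intro hD0
      have hsum0 : E + Eᵀ = 0 := by rw [hEE, hD0]; simp
      have hE0 : E = 0 :=
        aux_skew_rank h2 E (neg_eq_of_add_eq_zero_right hsum0).symm hEle
      have hN0 : Matrix.fromCols E (C - p.2) = 0 := by
        rw [hE0, hCp, hD0]
        ext i k
        cases k <;> simp [Matrix.fromCols]
      rw [hN0] at hrank
      simp at hrank
    -- rank D = 1
    have hDrank : D.rank = 1 := by
      rcases Nat.lt_or_ge D.rank 1 with h | h
      · exfalso
        apply hDne
        have hr0 : D.rank = 0 := by omega
        have hbot : LinearMap.range D.mulVecLin = ⊥ :=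
          Submodule.finrank_eq_zero.mp hr0
        ext i j
        have hmem : D *ᵥ Pi.single j 1 ∈ LinearMap.range D.mulVecLin :=
          ⟨Pi.single j 1, rfl⟩
        rw [hbot, Submodule.mem_bot] at hmem
        have := congrFun hmem i
        rw [Matrix.mulVec_single_one] at this
        simpa using this
      · omega
    -- range E ≤ range D
    have hrange : LinearMap.range E.mulVecLin ≤ LinearMap.range D.mulVecLin := by
      have hDm : LinearMap.range (C - p.2).mulVecLin = LinearMap.range D.mulVecLin := by
        have hCp' : C - p.2 = -D := by rw [hDdef]; abel
        rw [hCp']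
        apply le_antisymm
        · rintro v ⟨w, rfl⟩
          exact ⟨-w, by simp [Matrix.mulVecLin_apply, Matrix.neg_mulVec, Matrix.mulVec_neg]⟩
        · rintro v ⟨w, rfl⟩
          exact ⟨-w, by simp [Matrix.mulVecLin_apply, Matrix.neg_mulVec, Matrix.mulVec_neg]⟩
      have hN := aux_range_fromColumns E (C - p.2)
      rw [hDm] at hN
      have hfin : Module.finrank F
          (LinearMap.range (Matrix.fromCols E (C - p.2)).mulVecLin) = 1 := hrank
      have hfinD : Module.finrank F (LinearMap.range D.mulVecLin) = 1 := hDrank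
      have hle : LinearMap.range D.mulVecLin
          ≤ LinearMap.range (Matrix.fromCols E (C - p.2)).mulVecLin := by
        rw [hN]; exact le_sup_right
      have heq := Submodule.eq_of_le_of_finrank_le hle (by rw [hfin, hfinD])
      rw [heq, hN]
      exact le_sup_left
    -- E = D * X
    have hcol : ∀ j, ∃ w, D *ᵥ w = E *ᵥ Pi.single j 1 := by
      intro j
      exact hrange ⟨Pi.single j 1, rfl⟩
    choose w hw using hcol
    have hEX : E = D * (Matrix.of fun k j => w j k) := by
      ext i j
      have h1 := congrFun (hw j) i
      rw [Matrix.mulVec_single_one, Matrix.col_apply] at h1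
      rw [Matrix.mul_apply, ← h1]
      simp [Matrix.mulVec, dotProduct]
    -- the skew part argument
    set X : Matrix (Fin 2) (Fin ν) F := Matrix.of fun k j => w j k with hXdef
    set M : Matrix (Fin ν) (Fin ν) F :=
      E - ((2 : F)⁻¹ • (D * Δ * Dᵀ) + D * Δ * Cᵀ) with hMdef
    have hmul : D * ((2 : F)⁻¹ • (Δ * Dᵀ) + Δ * Cᵀ)
        = (2 : F)⁻¹ • (D * Δ * Dᵀ) + D * Δ * Cᵀ := by
      rw [Matrix.mul_add, Matrix.mul_smul]
      simp only [Matrix.mul_assoc]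
    have hMfact : M = D * (X - ((2 : F)⁻¹ • (Δ * Dᵀ) + Δ * Cᵀ)) := by
      rw [hMdef, hEX, Matrix.mul_sub, hmul]
    have hMrank : M.rank ≤ 1 := by
      rw [hMfact]
      calc (D * _).rank ≤ D.rank := Matrix.rank_mul_le_left _ _
        _ = 1 := hDrank
    have hMskew : Mᵀ = -M := by
      have hsum : M + Mᵀ = 0 := by
        have hMt : Mᵀ = Eᵀ - ((2 : F)⁻¹ • (D * Δ * Dᵀ) + C * Δ * Dᵀ) := by
          rw [hMdef, Matrix.transpose_sub, Matrix.transpose_add, Matrix.transpose_smul,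
            hT D D, hT D C]
        have : M + Mᵀ = (E + Eᵀ) - ((2 : F)⁻¹ • (D * Δ * Dᵀ) + D * Δ * Cᵀ)
            - ((2 : F)⁻¹ • (D * Δ * Dᵀ) + C * Δ * Dᵀ) := by rw [hMdef, hMt]; abel
        rw [this, hEE]
        match_scalars <;> (try field_simp) <;> ring
      exact (neg_eq_of_add_eq_zero_right hsum).symm
    have hM0 : M = 0 := aux_skew_rank h2 M hMskew hMrank
    have hEfin : E = (2 : F)⁻¹ • (D * Δ * Dᵀ) + D * Δ * Cᵀ := by
      rw [hMdef] at hM0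
      exact sub_eq_zero.mp hM0
    refine ⟨D, hDrank, Prod.ext_iff.mpr ⟨?_, hp2⟩⟩
    show p.1 = A - (2 : F)⁻¹ • (C * Δ * Cᵀ + D * Δ * Dᵀ + (2 : F) • (D * Δ * Cᵀ))
    rw [hp1, hEfin]
    match_scalars <;> (try field_simp) <;> ring
  · rintro ⟨D, hD, rfl⟩
    constructor
    · show (A - (2 : F)⁻¹ • (C * Δ * Cᵀ + D * Δ * Dᵀ + (2 : F) • (D * Δ * Cᵀ)))
        + (A - (2 : F)⁻¹ • (C * Δ * Cᵀ + D * Δ * Dᵀ + (2 : F) • (D * Δ * Cᵀ)))ᵀ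
        + (C + D) * Δ * (C + D)ᵀ = 0
      simp only [Matrix.transpose_sub, Matrix.transpose_add, Matrix.transpose_smul,
        hT, halt]
      simp only [Matrix.add_mul, Matrix.mul_add]
      match_scalars <;> (try field_simp) <;> ring
    · show (Matrix.fromCols
        ((A - (2 : F)⁻¹ • (C * Δ * Cᵀ))
          - (A - (2 : F)⁻¹ • (C * Δ * Cᵀ + D * Δ * Dᵀ + (2 : F) • (D * Δ * Cᵀ))))
        (C - (C + D))).rank = 1
      have hE' : (A - (2 : F)⁻¹ • (C * Δ * Cᵀ))
          - (A - (2 : F)⁻¹ • (C * Δ * Cᵀ + D * Δ * Dᵀ + (2 : F) • (D * Δ * Cᵀ)))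
          = D * ((2 : F)⁻¹ • (Δ * Dᵀ) + Δ * Cᵀ) := by
        rw [show D * ((2 : F)⁻¹ • (Δ * Dᵀ) + Δ * Cᵀ)
            = (2 : F)⁻¹ • (D * Δ * Dᵀ) + D * Δ * Cᵀ by
          rw [Matrix.mul_add, Matrix.mul_smul]; simp only [Matrix.mul_assoc]]
        match_scalars <;> (try field_simp) <;> ring
      have hD' : C - (C + D) = D * (-1 : Matrix (Fin 2) (Fin 2) F) := by
        rw [Matrix.mul_neg, Matrix.mul_one]; abel
      rw [hE', hD', ← Matrix.mul_fromCols]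
      apply le_antisymm
      · calc (D * _).rank ≤ D.rank := Matrix.rank_mul_le_left _ _
          _ = 1 := hD
      · have hback : D * Matrix.fromCols ((2 : F)⁻¹ • (Δ * Dᵀ) + Δ * Cᵀ) (-1 : Matrix (Fin 2) (Fin 2) F)
            * Matrix.fromRows (0 : Matrix (Fin ν) (Fin 2) F) (-1 : Matrix (Fin 2) (Fin 2) F)
            = D := by
          rw [Matrix.mul_assoc, Matrix.fromCols_mul_fromRows]
          simp
        calc 1 = D.rank := hD.symm
          _ = (D * Matrix.fromCols ((2 : F)⁻¹ • (Δ * Dᵀ) + Δ * Cᵀ) (-1 : Matrix (Fin 2) (Fin 2) F)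
              * Matrix.fromRows (0 : Matrix (Fin ν) (Fin 2) F)
                (-1 : Matrix (Fin 2) (Fin 2) F)).rank := by rw [hback]
          _ ≤ _ := Matrix.rank_mul_le_left _ _
end

section
/- Let F be a finite field of odd order q and z a non-square element of F. The number of pairs (S, applicable μ) — equivalently, for fixed a ∈ {0,1}, the set of matrices S ∈ O(2, diag(1,-z)) satisfying μ·(1, a)·S = (1, a) for some μ with μ² = 1 — has exactly 4 elements: S ∈ {I, -I, diag(1,-1), -diag(1,-1)} when a = 0, and S ∈ {±I, ±(1-z)^{-1}·[[1+z, 2],[-2z, -(1+z)]]} when a = 1. -/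
open Matrix

private lemma card4_aux {α : Type*} {A B C D : α} (hAB : A ≠ B) (hAC : A ≠ C) (hAD : A ≠ D)
    (hBC : B ≠ C) (hBD : B ≠ D) (hCD : C ≠ D) :
    Nat.card ({A, B, C, D} : Set α) = 4 := by
  rw [Nat.card_coe_set_eq,
    Set.ncard_insert_of_notMem (by simp [hAB, hAC, hAD])
      (((Set.finite_singleton D).insert C).insert B),
    Set.ncard_insert_of_notMem (by simp [hBC, hBD]) ((Set.finite_singleton D).insert C),
    Set.ncard_pair hCD]

set_option maxHeartbeats 1600000 in
theorem stmt_17 (F : Type*) [Field F] [Fintype F] (q : ℕ)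
    (hq : Fintype.card F = q) (hodd : Odd q) (z : F) (hz : ¬ IsSquare z)
    (Δ : Matrix (Fin 2) (Fin 2) F) (hΔ : Δ = !![1, 0; 0, -z])
    (a : F) (ha : a = 0 ∨ a = 1)
    (S01 : Set (Matrix (Fin 2) (Fin 2) F))
    (hS01 : S01 = {S | IsUnit S.det ∧ S * Δ * Sᵀ = Δ ∧
      ∃ μ : F, μ ^ 2 = 1 ∧ μ • (!![1, a] * S) = !![1, a]}) :
    Nat.card S01 = 4 ∧
    (a = 0 → S01 = {1, -1, !![(1 : F), 0; 0, -1], -(!![(1 : F), 0; 0, -1])}) ∧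
    (a = 1 → S01 = {1, -1,
        (1 - z)⁻¹ • !![1 + z, 2; -(2 * z), -(1 + z)],
        -((1 - z)⁻¹ • !![1 + z, 2; -(2 * z), -(1 + z)])}) := by
  have hchar : ringChar F ≠ 2 := by
    intro h
    have h2 := FiniteField.even_card_iff_char_two.mp h
    rw [hq] at h2
    rcases hodd with ⟨k, hk⟩
    omega
  have h2 : (2 : F) ≠ 0 := Ring.two_ne_zero hchar
  have h1n1 : (1 : F) ≠ -1 := fun h => h2 (by linear_combination h)
  have hz1 : (1 : F) - z ≠ 0 := fun h => hz ⟨1, by linear_combination -h⟩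
  have hz0 : z ≠ 0 := fun h => hz ⟨0, by rw [h]; ring⟩
  rcases ha with rfl | rfl
  · -- case a = 0
    have hset : S01 = {1, -1, !![(1 : F), 0; 0, -1], -(!![(1 : F), 0; 0, -1])} := by
      rw [hS01, hΔ]
      ext S
      simp only [Set.mem_setOf_eq, Set.mem_insert_iff, Set.mem_singleton_iff]
      constructor
      · rintro ⟨-, h, μ, hμ2, hμ⟩
        have e1 := congrFun (congrFun h 0) 0
        have e2 := congrFun (congrFun h 1) 0
        have e3 := congrFun (congrFun h 1) 1
        have f1 := congrFun (congrFun hμ 0) 0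
        have f2 := congrFun (congrFun hμ 0) 1
        simp only [Matrix.mul_apply, Matrix.smul_apply, Matrix.vecMul, dotProduct,
          Fin.sum_univ_two, Matrix.cons_val', Matrix.cons_val_zero, Matrix.cons_val_one,
          Matrix.head_cons, Matrix.head_fin_const, Matrix.empty_val',
          Matrix.cons_val_fin_one, Matrix.transpose_apply, Matrix.of_apply,
          smul_eq_mul, mul_one, mul_zero, zero_mul, add_zero, zero_add, one_mul] at e1 e2 e3 f1 f2
        have hμ0 : μ ≠ 0 := fun hh => one_ne_zero (α := F) (by rw [← f1, hh, zero_mul])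
        have h01 : S 0 1 = 0 := by
          rcases mul_eq_zero.mp f2 with h | h
          · exact absurd h hμ0
          · exact h
        have h00 : S 0 0 = μ := by linear_combination μ * f1 - S 0 0 * hμ2
        have h10 : S 1 0 = 0 := by
          have hh : S 1 0 * μ = 0 := by
            linear_combination e2 + S 1 1 * z * h01 - S 1 0 * h00
          rcases mul_eq_zero.mp hh with h | h
          · exact h
          · exact absurd h hμ0
        have h11 : S 1 1 = μ ∨ S 1 1 = -μ := by
          have hh : z * ((S 1 1 - μ) * (S 1 1 + μ)) = 0 := by
            linear_combination -e3 + S 1 0 * h10 - z * hμ2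
          rcases mul_eq_zero.mp hh with h | h
          · exact absurd h hz0
          · rcases mul_eq_zero.mp h with h | h
            · exact Or.inl (sub_eq_zero.mp h)
            · exact Or.inr (eq_neg_of_add_eq_zero_left h)
        have hμc : μ = 1 ∨ μ = -1 := by
          rcases mul_eq_zero.mp (show (μ - 1) * (μ + 1) = 0 by linear_combination hμ2) with h | h
          · exact Or.inl (sub_eq_zero.mp h)
          · exact Or.inr (eq_neg_of_add_eq_zero_left h)
        rcases hμc with rfl | rfl <;> rcases h11 with h11 | h11
        · left
          ext i j; fin_cases i <;> fin_cases j <;>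
            simp [h00, h01, h10, h11, Matrix.one_apply]
        · right; right; left
          ext i j; fin_cases i <;> fin_cases j <;>
            simp [h00, h01, h10, h11]
        · right; left
          ext i j; fin_cases i <;> fin_cases j <;>
            simp [h00, h01, h10, h11, Matrix.one_apply]
        · right; right; right
          ext i j; fin_cases i <;> fin_cases j <;>
            simp [h00, h01, h10, h11, Matrix.one_apply]
      · rintro (rfl | rfl | rfl | rfl)
        · exact ⟨by simp, by simp, 1, one_pow 2, by simp⟩
        · refine ⟨by simp [Matrix.det_neg], ?_, -1, by norm_num, ?_⟩
          · ext i j; fin_cases i <;> fin_cases j <;>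
              simp [Matrix.mul_apply, Fin.sum_univ_two, Matrix.transpose_apply, Matrix.smul_apply, Matrix.vecHead] <;> ring
          · ext i j; fin_cases i <;> fin_cases j <;>
              simp [Matrix.mul_apply, Matrix.vecMul, dotProduct, Fin.sum_univ_two, Matrix.smul_apply] <;> ring
        · refine ⟨?_, ?_, 1, one_pow 2, ?_⟩
          · rw [Matrix.det_fin_two_of]; simp
          · ext i j; fin_cases i <;> fin_cases j <;>
              simp [Matrix.mul_apply, Fin.sum_univ_two, Matrix.transpose_apply, Matrix.smul_apply, Matrix.vecHead] <;> ring
          · ext i j; fin_cases i <;> fin_cases j <;>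
              simp [Matrix.mul_apply, Matrix.vecMul, dotProduct, Fin.sum_univ_two, Matrix.smul_apply] <;> ring
        · refine ⟨by simp [Matrix.det_neg, Matrix.det_fin_two_of], ?_, -1, by norm_num, ?_⟩
          · ext i j; fin_cases i <;> fin_cases j <;>
              simp [Matrix.mul_apply, Fin.sum_univ_two, Matrix.transpose_apply, Matrix.smul_apply, Matrix.vecHead] <;> ring
          · ext i j; fin_cases i <;> fin_cases j <;>
              simp [Matrix.mul_apply, Matrix.vecMul, dotProduct, Fin.sum_univ_two, Matrix.smul_apply] <;> ring
    refine ⟨?_, fun _ => hset, fun h => absurd h.symm one_ne_zero⟩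
    rw [hset]
    refine card4_aux ?_ ?_ ?_ ?_ ?_ ?_
    · intro h; exact h1n1 (by simpa [Matrix.one_apply] using congrFun (congrFun h 0) 0)
    · intro h
      have := congrFun (congrFun h 1) 1
      simp [Matrix.one_apply] at this
      exact h1n1 this
    · intro h
      have := congrFun (congrFun h 0) 0
      simp [Matrix.one_apply] at this
      exact h1n1 this
    · intro h
      have := congrFun (congrFun h 0) 0
      simp [Matrix.one_apply] at this
      exact h1n1 this.symm
    · intro h
      have := congrFun (congrFun h 1) 1
      simp [Matrix.one_apply] at this
      exact h1n1 this.symm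
    · intro h
      have := congrFun (congrFun h 0) 0
      simp at this
      exact h1n1 this
  · -- case a = 1
    set M : Matrix (Fin 2) (Fin 2) F := (1 - z)⁻¹ • !![1 + z, 2; -(2 * z), -(1 + z)] with hM
    have hset : S01 = {1, -1, M, -M} := by
      rw [hS01, hΔ]
      ext S
      simp only [Set.mem_setOf_eq, Set.mem_insert_iff, Set.mem_singleton_iff]
      constructor
      · rintro ⟨-, h, μ, hμ2, hμ⟩
        have e1 := congrFun (congrFun h 0) 0
        have e2 := congrFun (congrFun h 1) 0
        have f1 := congrFun (congrFun hμ 0) 0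
        have f2 := congrFun (congrFun hμ 0) 1
        simp only [Matrix.mul_apply, Matrix.smul_apply, Matrix.vecMul, dotProduct,
          Fin.sum_univ_two, Matrix.cons_val', Matrix.cons_val_zero, Matrix.cons_val_one,
          Matrix.head_cons, Matrix.head_fin_const, Matrix.empty_val',
          Matrix.cons_val_fin_one, Matrix.transpose_apply, Matrix.of_apply,
          smul_eq_mul, mul_one, mul_zero, zero_mul, add_zero, zero_add, one_mul] at e1 e2 f1 f2
        have hμc : μ = 1 ∨ μ = -1 := by
          rcases mul_eq_zero.mp (show (μ - 1) * (μ + 1) = 0 by linear_combination hμ2) with h | h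
          · exact Or.inl (sub_eq_zero.mp h)
          · exact Or.inr (eq_neg_of_add_eq_zero_left h)
        have hs10 : S 1 0 = μ - S 0 0 := by
          linear_combination μ * f1 - (S 0 0 + S 1 0) * hμ2
        have hs11 : S 1 1 = μ - S 0 1 := by
          linear_combination μ * f2 - (S 0 1 + S 1 1) * hμ2
        have hkey1 : S 0 0 - z * S 0 1 = μ := by
          linear_combination μ * e2 - μ * S 0 0 * hs10 + μ * z * S 0 1 * hs11 + μ * e1 -
            (S 0 0 - z * S 0 1) * hμ2
        have hfact : z * S 0 1 * ((z - 1) * S 0 1 + 2 * μ) = 0 := by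
          linear_combination e1 - (S 0 0 + z * S 0 1 + μ) * hkey1 - hμ2
        rcases mul_eq_zero.mp hfact with hc | hc
        · have h01 : S 0 1 = 0 := by
            rcases mul_eq_zero.mp hc with h | h
            · exact absurd h hz0
            · exact h
          rcases hμc with rfl | rfl
          · left
            have h00 : S 0 0 = 1 := by linear_combination hkey1 + z * h01
            have h10 : S 1 0 = 0 := by linear_combination hs10 - h00
            have h11 : S 1 1 = 1 := by linear_combination hs11 - h01
            ext i j; fin_cases i <;> fin_cases j <;>
              simp [h00, h01, h10, h11, Matrix.one_apply]
          · right; left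
            have h00 : S 0 0 = -1 := by linear_combination hkey1 + z * h01
            have h10 : S 1 0 = 0 := by linear_combination hs10 - h00
            have h11 : S 1 1 = -1 := by linear_combination hs11 - h01
            ext i j; fin_cases i <;> fin_cases j <;>
              simp [h00, h01, h10, h11, Matrix.one_apply]
        · have h01 : S 0 1 = (1 - z)⁻¹ * (2 * μ) := by
            rw [inv_mul_eq_div, eq_div_iff hz1]; linear_combination -hc
          have h00 : S 0 0 = (1 - z)⁻¹ * ((1 + z) * μ) := by
            rw [inv_mul_eq_div, eq_div_iff hz1]; linear_combination (1 - z) * hkey1 - z * hc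
          have h10 : S 1 0 = (1 - z)⁻¹ * (-(2 * z) * μ) := by
            rw [inv_mul_eq_div, eq_div_iff hz1]
            linear_combination (1 - z) * hs10 - (1 - z) * hkey1 + z * hc
          have h11 : S 1 1 = (1 - z)⁻¹ * (-(1 + z) * μ) := by
            rw [inv_mul_eq_div, eq_div_iff hz1]; linear_combination (1 - z) * hs11 + hc
          rcases hμc with rfl | rfl
          · right; right; left
            ext i j; fin_cases i <;> fin_cases j <;>
              simp [hM, h00, h01, h10, h11, Matrix.smul_apply] <;> ring
          · right; right; right
            ext i j; fin_cases i <;> fin_cases j <;>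
              simp [hM, h00, h01, h10, h11, Matrix.smul_apply] <;> ring
      · have hdetM : M.det = -1 := by
          rw [hM, Matrix.det_fin_two]
          simp only [Matrix.smul_apply, Matrix.cons_val', Matrix.cons_val_zero,
            Matrix.cons_val_one, Matrix.head_cons, Matrix.empty_val',
            Matrix.cons_val_fin_one, Matrix.of_apply, smul_eq_mul]
          field_simp
          ring
        have hM' : M = !![(1 - z)⁻¹ * (1 + z), (1 - z)⁻¹ * 2;
            (1 - z)⁻¹ * (-(2 * z)), (1 - z)⁻¹ * (-(1 + z))] := by
          ext i j; fin_cases i <;> fin_cases j <;> simp [hM]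
        rintro (rfl | rfl | rfl | rfl)
        · exact ⟨by simp, by simp, 1, one_pow 2, by simp⟩
        · refine ⟨by simp [Matrix.det_neg], ?_, -1, by norm_num, ?_⟩
          · ext i j; fin_cases i <;> fin_cases j <;>
              simp [Matrix.mul_apply, Fin.sum_univ_two, Matrix.transpose_apply, Matrix.smul_apply, Matrix.vecHead] <;> ring
          · ext i j; fin_cases i <;> fin_cases j <;>
              simp [Matrix.mul_apply, Matrix.vecMul, dotProduct, Fin.sum_univ_two, Matrix.smul_apply] <;> ring
        · refine ⟨by rw [hdetM]; exact isUnit_one.neg, ?_, 1, one_pow 2, ?_⟩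
          · rw [hM']; ext i j; fin_cases i <;> fin_cases j <;>
              simp [Matrix.mul_apply, Fin.sum_univ_two, Matrix.transpose_apply,
                Matrix.vecHead] <;> field_simp [hz1] <;> ring
          · rw [hM']; ext i j; fin_cases i <;> fin_cases j <;>
              simp [Matrix.mul_apply, Matrix.vecMul, dotProduct,
                Fin.sum_univ_two] <;> field_simp [hz1] <;> ring
        · refine ⟨by simp [Matrix.det_neg, hdetM], ?_, -1, by norm_num, ?_⟩
          · rw [hM']; ext i j; fin_cases i <;> fin_cases j <;>
              simp [Matrix.mul_apply, Fin.sum_univ_two, Matrix.transpose_apply,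
                Matrix.vecHead] <;> field_simp [hz1] <;> ring
          · rw [hM']; ext i j; fin_cases i <;> fin_cases j <;>
              simp [Matrix.mul_apply, Matrix.vecMul, dotProduct,
                Fin.sum_univ_two] <;> field_simp [hz1] <;> ring
    have hMne : (1 - z)⁻¹ * 2 ≠ 0 := mul_ne_zero (inv_ne_zero hz1) h2
    refine ⟨?_, fun h => absurd h one_ne_zero, fun _ => hset⟩
    rw [hset]
    refine card4_aux ?_ ?_ ?_ ?_ ?_ ?_
    · intro h; exact h1n1 (by simpa [Matrix.one_apply] using congrFun (congrFun h 0) 0)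
    · intro h
      have := congrFun (congrFun h 0) 1
      simp [hM, Matrix.one_apply] at this
      rcases this with h' | h'
      · exact hz1 h'
      · exact h2 h'
    · intro h
      have := congrFun (congrFun h 0) 1
      simp [hM, Matrix.one_apply] at this
      rcases this with h' | h'
      · exact hz1 h'
      · exact h2 h'
    · intro h
      have := congrFun (congrFun h 0) 1
      simp [hM, Matrix.one_apply] at this
      rcases this with h' | h'
      · exact hz1 h'
      · exact h2 h'
    · intro h
      have := congrFun (congrFun h 0) 1
      simp [hM, Matrix.one_apply] at this
      rcases this with h' | h'
      · exact hz1 h'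
      · exact h2 h'
    · intro h
      have := congrFun (congrFun h 0) 1
      simp [hM] at this
      exact hMne ((mul_eq_zero.mp (show (2 : F) * ((1 - z)⁻¹ * 2) = 0 by
        linear_combination this)).resolve_left h2)
end
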